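/- arXiv:2303.05179 — 6 statements merged into one kernel-verified Lean document; each statement's English description precedes it below -/
import Mathlib

section
/- The linear span of the family {B_{n,k} : n ∈ ℤ, k ∈ ℕ, k ≥ 1} is dense in the Hilbert space L²((0,2π)×(0,π), sin θ · dλ dθ); together with their orthonormality, these functions form an orthonormal basis of this space (which is isometrically L² of the two-dimensional unit sphere in spherical coordinates). -/
open Real MeasureTheory
open scoped ENNReal NNReal

noncomputable def sphericalCoordMeasure : Measure (ℝ × ℝ) :=
  (volume.restrict (Set.Ioo (0:ℝ) (2 * π) ×ˢ Set.Ioo (0:ℝ) π)).withDensity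
    fun p => ENNReal.ofReal (Real.sin p.2)

noncomputable def sphericalTrigFun (n : ℤ) (k : ℕ) (p : ℝ × ℝ) : ℂ :=
  Complex.exp (Complex.I * (n : ℂ) * (p.1 : ℂ)) * (Real.sin (k * p.2) : ℂ) /
    ((π : ℂ) * (Real.sqrt (Real.sin p.2) : ℂ))

namespace SphAux

def R : Set (ℝ × ℝ) := Set.Ioo (0:ℝ) (2*π) ×ˢ Set.Ioo (0:ℝ) π

noncomputable def ν : Measure (ℝ × ℝ) := volume.restrict R

lemma measurableSet_R : MeasurableSet R := (measurableSet_Ioo.prod measurableSet_Ioo)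

lemma sph_eq : sphericalCoordMeasure = ν.withDensity (fun p => ENNReal.ofReal (Real.sin p.2)) := rfl

lemma meas_w : Measurable (fun p : ℝ × ℝ => ENNReal.ofReal (Real.sin p.2)) :=
  (ENNReal.measurable_ofReal.comp (Real.measurable_sin.comp measurable_snd))

lemma ae_mem_R : ∀ᵐ p ∂ν, p ∈ R := ae_restrict_mem measurableSet_R

lemma ae_sin_pos : ∀ᵐ p ∂ν, 0 < Real.sin p.2 := by
  filter_upwards [ae_mem_R] with p hp
  exact Real.sin_pos_of_pos_of_lt_pi hp.2.1 hp.2.2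

lemma nu_ac : ν ≪ sphericalCoordMeasure := by
  rw [sph_eq]
  refine withDensity_absolutelyContinuous' meas_w.aemeasurable ?_
  filter_upwards [ae_sin_pos] with p hp
  simp [ENNReal.ofReal_eq_zero, not_le, hp]

/-- pointwise identity for the squared enorm -/
lemma enorm_sq_eq (s : ℝ) (z : ℂ) :
    ENNReal.ofReal s * (‖z‖₊ : ℝ≥0∞) ^ (2:ℝ) =
      (‖((Real.sqrt s : ℝ) : ℂ) * z‖₊ : ℝ≥0∞) ^ (2:ℝ) := by
  rw [nnnorm_mul, ENNReal.coe_mul, ENNReal.mul_rpow_of_nonneg _ _ (by norm_num)]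
  congr 1
  have h1 : (‖((Real.sqrt s : ℝ) : ℂ)‖₊ : ℝ≥0∞) = ENNReal.ofReal (Real.sqrt s) := by
    simp [← ENNReal.ofReal_coe_nnreal, Complex.nnnorm_real, Real.nnnorm_of_nonneg (Real.sqrt_nonneg s)]
  rw [h1, ENNReal.ofReal_rpow_of_nonneg (Real.sqrt_nonneg s) (by norm_num)]
  rcases le_or_gt 0 s with hs | hs
  · rw [show ((2:ℝ)) = ((2:ℕ):ℝ) by norm_num, Real.rpow_natCast, Real.sq_sqrt hs]
  · rw [Real.sqrt_eq_zero_of_nonpos hs.le, Real.zero_rpow (by norm_num)]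
    simp [ENNReal.ofReal_eq_zero, hs.le]

lemma eLpNorm_transfer (h : ℝ × ℝ → ℂ) :
    eLpNorm h 2 sphericalCoordMeasure
      = eLpNorm (fun p => ((Real.sqrt (Real.sin p.2) : ℝ) : ℂ) * h p) 2 ν := by
  rw [eLpNorm_eq_lintegral_rpow_enorm_toReal (by norm_num) (by norm_num),
    eLpNorm_eq_lintegral_rpow_enorm_toReal (by norm_num) (by norm_num)]
  congr 1
  rw [sph_eq, lintegral_withDensity_eq_lintegral_mul_non_measurable _ meas_w
    (Filter.Eventually.of_forall fun x => ENNReal.ofReal_lt_top)]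
  refine lintegral_congr fun p => ?_
  have h2 : ENNReal.toReal 2 = (2:ℝ) := by norm_num
  simp only [Pi.mul_apply, h2]
  exact enorm_sq_eq (Real.sin p.2) (h p)


noncomputable def sq (p : ℝ × ℝ) : ℂ := ((Real.sqrt (Real.sin p.2) : ℝ) : ℂ)

lemma cont_sq_aux : Measurable sq :=
  Complex.measurable_ofReal.comp ((Real.continuous_sqrt.measurable).comp
    (Real.measurable_sin.comp measurable_snd))

lemma memLp_transfer {f : ℝ × ℝ → ℂ} (hf : MemLp f 2 sphericalCoordMeasure) :
    MemLp (fun p => sq p * f p) 2 ν := by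
  constructor
  · exact (cont_sq_aux.aestronglyMeasurable).mul (hf.1.mono_ac nu_ac)
  · have : eLpNorm (fun p => sq p * f p) 2 ν
        = eLpNorm (fun p => ((Real.sqrt (Real.sin p.2) : ℝ) : ℂ) * f p) 2 ν := rfl
    rw [this, ← eLpNorm_transfer]
    exact hf.2

lemma nu_finite : ν Set.univ < ⊤ := by
  rw [ν, Measure.restrict_apply_univ, R, Measure.volume_eq_prod, Measure.prod_prod]
  exact ENNReal.mul_lt_top (by simp [Real.volume_Ioo]; exact ENNReal.mul_lt_top (by simp) ENNReal.ofReal_lt_top) (by simp [Real.volume_Ioo])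

/-- Approximation by continuous functions compactly supported inside `R`. -/
lemma exists_cont_approx {F : ℝ × ℝ → ℂ} (hF : MemLp F 2 ν) {ε : ℝ≥0∞} (hε : ε ≠ 0) :
    ∃ h : ℝ × ℝ → ℂ, (Continuous h ∧ IsCompact (tsupport h) ∧ tsupport h ⊆ R) ∧
      eLpNorm (F - h) 2 ν ≤ ε := by
  have main := hF.induction_dense (by norm_num)
    (fun g => Continuous g ∧ IsCompact (tsupport g) ∧ tsupport g ⊆ R) ?_ ?_ ?_ hε
  · obtain ⟨g, hg1, hg2⟩ := main
    exact ⟨g, hg2, hg1⟩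
  · -- approximate indicators
    intro c s hs hsν ε' hε'
    have hop : IsOpen R := (isOpen_Ioo.prod isOpen_Ioo)
    -- replace s by s ∩ R
    set s' := s ∩ R with hs'def
    have hs' : MeasurableSet s' := hs.inter measurableSet_R
    have hind : Set.indicator s (fun _ => c) =ᵐ[ν] Set.indicator s' (fun _ => c) := by
      filter_upwards [ae_mem_R] with p hp
      by_cases hps : p ∈ s
      · simp [Set.indicator_of_mem, hps, hs'def, hp]
      · simp [Set.indicator_of_notMem, hps, hs'def]
    obtain ⟨η, ηpos, hη⟩ := exists_eLpNorm_indicator_le (μ := ν) (p := 2) (by norm_num) c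
      (ENNReal.half_pos hε').ne'
    have hvols' : volume s' ≠ ⊤ := by
      refine (lt_of_le_of_lt (measure_mono Set.inter_subset_right) ?_).ne
      rw [← Measure.restrict_apply_univ R]
      exact nu_finite
    obtain ⟨k, hks', hk, hkd⟩ := hs'.exists_isCompact_diff_lt hvols'
      (ENNReal.coe_pos.mpr ηpos).ne'
    obtain ⟨K, hK, hkK, hKR⟩ := exists_compact_between hk hop (hks'.trans Set.inter_subset_right)
    obtain ⟨g, hgc, hgel, _, hgsupp, _⟩ := exists_continuous_eLpNorm_sub_le_of_closed
      (μ := volume) (p := 2) (by norm_num) hk.isClosed isOpen_interior hkK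
      hk.measure_lt_top.ne c (ENNReal.half_pos hε').ne'
    refine ⟨g, ?_, hgc, ?_, ?_⟩
    · -- eLpNorm bound
      have h1 : eLpNorm (fun x => g x - Set.indicator k (fun _ => c) x) 2 ν ≤ ε' / 2 :=
        le_trans (eLpNorm_mono_measure _ Measure.restrict_le_self) hgel
      have h2 : eLpNorm (fun x => Set.indicator k (fun _ => c) x
          - Set.indicator s' (fun _ => c) x) 2 ν ≤ ε' / 2 := by
        have hdiff : (fun x => Set.indicator k (fun _ => c) x - Set.indicator s' (fun _ => c) x)
            = -(fun x => Set.indicator (s' \ k) (fun _ => c) x) := by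
          funext x
          simp only [Pi.neg_apply, Set.indicator_sdiff hks', Pi.sub_apply]
          ring
        rw [hdiff, eLpNorm_neg]
        refine hη _ ?_
        have hmle : ν (s' \ k) ≤ volume (s' \ k) := by
          rw [ν, Measure.restrict_apply (hs'.diff hk.isClosed.measurableSet)]
          exact measure_mono Set.inter_subset_left
        exact hmle.trans hkd.le
      calc eLpNorm (g - Set.indicator s fun _ => c) 2 ν
          = eLpNorm (g - Set.indicator s' fun _ => c) 2 ν := by
            refine eLpNorm_congr_ae ?_
            filter_upwards [hind] with p hp
            simp [hp]
        _ = eLpNorm ((fun x => g x - Set.indicator k (fun _ => c) x) +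
              (fun x => Set.indicator k (fun _ => c) x - Set.indicator s' (fun _ => c) x)) 2 ν := by
            congr 1
            funext x
            simp [Pi.sub_apply]
        _ ≤ ε' / 2 + ε' / 2 := le_trans (eLpNorm_add_le
            ((hgc.aestronglyMeasurable).sub
              ((measurable_const.indicator hk.isClosed.measurableSet).aestronglyMeasurable))
            (((measurable_const.indicator hk.isClosed.measurableSet).aestronglyMeasurable).sub
              ((measurable_const.indicator hs').aestronglyMeasurable)) one_le_two)
            (add_le_add h1 h2)
        _ = ε' := ENNReal.add_halves ε'
    · -- compact support
      refine IsCompact.of_isClosed_subset hK isClosed_closure ?_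
      refine closure_minimal (hgsupp.trans interior_subset) hK.isClosed
    · exact (closure_minimal (hgsupp.trans interior_subset) hK.isClosed).trans hKR
  · intro f g hf hg
    exact ⟨hf.1.add hg.1, (hf.2.1.union hg.2.1).of_isClosed_subset isClosed_closure
      (tsupport_add f g), (tsupport_add f g).trans (Set.union_subset hf.2.2 hg.2.2)⟩
  · intro f hf
    exact hf.1.aestronglyMeasurable


instance fact_two_pi_pos : Fact (0 < 2 * π) := ⟨by positivity⟩

noncomputable def mono (nm : ℤ × ℤ) : C(AddCircle (2*π) × AddCircle (2*π), ℂ) :=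
  ((fourier nm.1).comp ⟨Prod.fst, continuous_fst⟩) *
    ((fourier nm.2).comp ⟨Prod.snd, continuous_snd⟩)

lemma mono_apply (n m : ℤ) (q : AddCircle (2*π) × AddCircle (2*π)) :
    mono (n, m) q = fourier n q.1 * fourier m q.2 := rfl

noncomputable def monoSpan : Submodule ℂ C(AddCircle (2*π) × AddCircle (2*π), ℂ) :=
  Submodule.span ℂ (Set.range mono)

lemma one_mem_monoSpan : (1 : C(AddCircle (2*π) × AddCircle (2*π), ℂ)) ∈ monoSpan := by
  refine Submodule.subset_span ⟨(0,0), ?_⟩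
  ext q
  simp [mono, fourier_zero]

lemma mul_mem_monoSpan {a b : C(AddCircle (2*π) × AddCircle (2*π), ℂ)}
    (ha : a ∈ monoSpan) (hb : b ∈ monoSpan) : a * b ∈ monoSpan := by
  induction ha using Submodule.span_induction with
  | mem x hx =>
    induction hb using Submodule.span_induction with
    | mem y hy =>
      obtain ⟨⟨n, m⟩, rfl⟩ := hx
      obtain ⟨⟨n', m'⟩, rfl⟩ := hy
      refine Submodule.subset_span ⟨(n + n', m + m'), ?_⟩
      ext q
      simp only [mono_apply, ContinuousMap.mul_apply, mono_apply, fourier_add]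
      ring
    | zero => rw [mul_zero]; exact Submodule.zero_mem _
    | add y z _ _ hy hz => rw [mul_add]; exact Submodule.add_mem _ hy hz
    | smul c y _ hy => rw [mul_smul_comm]; exact Submodule.smul_mem _ _ hy
  | zero => rw [zero_mul]; exact Submodule.zero_mem _
  | add y z _ _ hy hz => rw [add_mul]; exact Submodule.add_mem _ hy hz
  | smul c y _ hy => rw [smul_mul_assoc]; exact Submodule.smul_mem _ _ hy

lemma star_mem_monoSpan {a : C(AddCircle (2*π) × AddCircle (2*π), ℂ)}
    (ha : a ∈ monoSpan) : star a ∈ monoSpan := by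
  induction ha using Submodule.span_induction with
  | mem x hx =>
    obtain ⟨⟨n, m⟩, rfl⟩ := hx
    refine Submodule.subset_span ⟨(-n, -m), ?_⟩
    ext q
    simp only [mono_apply, ContinuousMap.star_apply, ContinuousMap.mul_apply,
      fourier_neg, Complex.star_def, map_mul]
  | zero => rw [star_zero]; exact Submodule.zero_mem _
  | add y z _ _ hy hz => rw [star_add]; exact Submodule.add_mem _ hy hz
  | smul c y _ hy =>
    rw [star_smul]
    exact Submodule.smul_mem _ _ hy

noncomputable def monoStarAlg : StarSubalgebra ℂ C(AddCircle (2*π) × AddCircle (2*π), ℂ) where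
  carrier := (monoSpan : Set C(AddCircle (2*π) × AddCircle (2*π), ℂ))
  add_mem' := fun ha hb => Submodule.add_mem _ ha hb
  zero_mem' := Submodule.zero_mem _
  mul_mem' := fun ha hb => mul_mem_monoSpan ha hb
  one_mem' := one_mem_monoSpan
  algebraMap_mem' := fun c => by
    have : algebraMap ℂ C(AddCircle (2*π) × AddCircle (2*π), ℂ) c = c • 1 :=
      Algebra.algebraMap_eq_smul_one c
    rw [this]
    exact Submodule.smul_mem _ _ one_mem_monoSpan
  star_mem' := fun ha => star_mem_monoSpan ha

lemma monoStarAlg_separates : monoStarAlg.SeparatesPoints := by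
  intro x y hxy
  have h2pi : (2*π) ≠ 0 := (fact_two_pi_pos.out).ne'
  rcases Prod.ext_iff.not.mp hxy with h
  by_cases h1 : x.1 = y.1
  · have h2 : x.2 ≠ y.2 := fun h2 => hxy (Prod.ext h1 h2)
    refine ⟨_, ⟨mono (0, 1), Submodule.subset_span ⟨(0,1), rfl⟩, rfl⟩, ?_⟩
    simp only [mono_apply, fourier_zero, one_mul, fourier_one]
    exact fun hc => h2 (AddCircle.injective_toCircle h2pi (Circle.coe_injective hc))
  · refine ⟨_, ⟨mono (1, 0), Submodule.subset_span ⟨(1,0), rfl⟩, rfl⟩, ?_⟩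
    simp only [mono_apply, fourier_zero, mul_one, fourier_one]
    exact fun hc => h1 (AddCircle.injective_toCircle h2pi (Circle.coe_injective hc))

lemma monoSpan_dense (H : C(AddCircle (2*π) × AddCircle (2*π), ℂ)) {τ : ℝ} (hτ : 0 < τ) :
    ∃ P ∈ monoSpan, ∀ q, ‖H q - P q‖ ≤ τ := by
  have htop : monoStarAlg.topologicalClosure = ⊤ :=
    ContinuousMap.starSubalgebra_topologicalClosure_eq_top_of_separatesPoints
      monoStarAlg monoStarAlg_separates
  have hH : H ∈ closure (monoStarAlg : Set C(AddCircle (2*π) × AddCircle (2*π), ℂ)) := by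
    rw [← StarSubalgebra.topologicalClosure_coe, htop]
    trivial
  obtain ⟨P, hP, hdist⟩ := Metric.mem_closure_iff.mp hH τ hτ
  refine ⟨P, hP, fun q => ?_⟩
  have := ContinuousMap.dist_apply_le_dist (f := H) (g := P) q
  rw [dist_eq_norm] at this
  exact this.trans hdist.le


noncomputable def e (x : AddCircle (2*π)) : ℝ := (AddCircle.equivIco (2*π) 0 x : ℝ)

lemma e_mem (x : AddCircle (2*π)) : e x ∈ Set.Ico 0 (2*π) := by
  have := (AddCircle.equivIco (2*π) 0 x).2
  simpa [e] using this

lemma e_mk {t : ℝ} (ht : t ∈ Set.Ico 0 (2*π)) : e (↑t) = t := by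
  have ht' : t ∈ Set.Ico (0:ℝ) (0 + 2*π) := by simpa using ht
  have : (AddCircle.equivIco (2*π) 0) ↑t = ⟨t, ht'⟩ := by
    rw [Equiv.apply_eq_iff_eq_symm_apply]
    rfl
  rw [e, this]

lemma e_contAt {x : AddCircle (2*π)} (hx : x ≠ ((0:ℝ) : AddCircle (2*π))) :
    ContinuousAt e x :=
  continuousAt_subtype_val.comp (AddCircle.continuousAt_equivIco (2*π) 0 hx)

noncomputable def ext2 (h : ℝ × ℝ → ℂ) (q : AddCircle (2*π) × AddCircle (2*π)) : ℂ :=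
  h (e q.1, e q.2)

lemma ext2_eval (h : ℝ × ℝ → ℂ) {lam θ : ℝ} (hlam : lam ∈ Set.Ico 0 (2*π))
    (hθ : θ ∈ Set.Ico 0 (2*π)) : ext2 h (↑lam, ↑θ) = h (lam, θ) := by
  rw [ext2, e_mk hlam, e_mk hθ]

lemma e_neg {θ : ℝ} (hθ : θ ∈ Set.Ioo 0 π) : e (↑(-θ)) = 2*π - θ := by
  have h1 : ((-θ : ℝ) : AddCircle (2*π)) = ((-θ + 2*π : ℝ) : AddCircle (2*π)) :=
    (AddCircle.coe_add_period (2*π) (-θ)).symm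
  have h2 : (-θ + 2*π) ∈ Set.Ico (0:ℝ) (2*π) := by
    constructor
    · have := hθ.2.le
      have hpi := Real.pi_pos
      nlinarith [Real.pi_gt_three]
    · linarith [hθ.1]
  rw [h1, e_mk h2]
  ring

lemma ext2_neg_eval (h : ℝ × ℝ → ℂ) (hsub : tsupport h ⊆ R) (x : AddCircle (2*π))
    {θ : ℝ} (hθ : θ ∈ Set.Ioo 0 π) : ext2 h (x, ↑(-θ)) = 0 := by
  rw [ext2]
  apply image_eq_zero_of_notMem_tsupport
  intro hmem
  have hR := hsub hmem
  rw [R] at hR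
  have h4 : e (((-θ:ℝ) : AddCircle (2*π))) ∈ Set.Ioo (0:ℝ) π := hR.2
  rw [e_neg hθ] at h4
  linarith [h4.2, hθ.2]

/-- key bounds on the support -/
lemma support_bounds {h : ℝ × ℝ → ℂ} (hcomp : IsCompact (tsupport h)) (hsub : tsupport h ⊆ R) :
    ∃ a₁ b₁ a₂ b₂ : ℝ, (0 < a₁ ∧ a₁ ≤ b₁ ∧ b₁ < 2*π) ∧ (0 < a₂ ∧ a₂ ≤ b₂ ∧ b₂ < 2*π) ∧
      ∀ p ∈ tsupport h, p.1 ∈ Set.Icc a₁ b₁ ∧ p.2 ∈ Set.Icc a₂ b₂ := by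
  have hpi := Real.pi_gt_three
  rcases (tsupport h).eq_empty_or_nonempty with he | hne
  · exact ⟨1, 1, 1, 1, ⟨one_pos, le_refl 1, by linarith⟩, ⟨one_pos, le_refl 1, by linarith⟩,
      fun p hp => by simp [he] at hp⟩
  · have h1 : IsCompact (Prod.fst '' tsupport h) := hcomp.image continuous_fst
    have h2 : IsCompact (Prod.snd '' tsupport h) := hcomp.image continuous_snd
    have hne1 : (Prod.fst '' tsupport h).Nonempty := hne.image _
    have hne2 : (Prod.snd '' tsupport h).Nonempty := hne.image _
    refine ⟨sInf (Prod.fst '' tsupport h), sSup (Prod.fst '' tsupport h),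
      sInf (Prod.snd '' tsupport h), sSup (Prod.snd '' tsupport h),
      ⟨?_, csInf_le_csSup hne1 h1.bddBelow h1.bddAbove, ?_⟩,
      ⟨?_, csInf_le_csSup hne2 h2.bddBelow h2.bddAbove, ?_⟩, ?_⟩
    · obtain ⟨p, hp, hpe⟩ := h1.sInf_mem hne1
      have := (hsub hp).1.1
      simpa [hpe] using this
    · obtain ⟨p, hp, hpe⟩ := h1.sSup_mem hne1
      have := (hsub hp).1.2
      simpa [hpe] using this
    · obtain ⟨p, hp, hpe⟩ := h2.sInf_mem hne2
      have := (hsub hp).2.1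
      simpa [hpe] using this
    · obtain ⟨p, hp, hpe⟩ := h2.sSup_mem hne2
      have h3 := (hsub hp).2.2
      have : p.2 < 2*π := by linarith
      simpa [hpe] using this
    · intro p hp
      exact ⟨⟨csInf_le h1.bddBelow ⟨p, hp, rfl⟩, le_csSup h1.bddAbove ⟨p, hp, rfl⟩⟩,
        ⟨csInf_le h2.bddBelow ⟨p, hp, rfl⟩, le_csSup h2.bddAbove ⟨p, hp, rfl⟩⟩⟩

lemma vanish_near_zero {a b c : ℝ} (_ha : 0 < a) (hab : a ≤ b) (hb : b < 2*π)
    (_hc : 0 < c) (hca : c ≤ a) (hcb : c ≤ 2*π - b)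
    {t : ℝ} (htc : t ∈ Set.Ioo (-c) c) : e (↑t) ∉ Set.Icc a b := by
  rcases le_or_gt 0 t with hge | hlt
  · have hmem : t ∈ Set.Ico (0:ℝ) (2*π) := ⟨hge, by linarith [htc.2]⟩
    rw [e_mk hmem]
    intro hicc
    linarith [hicc.1, htc.2]
  · have h1 : ((t : ℝ) : AddCircle (2*π)) = ((t + 2*π : ℝ) : AddCircle (2*π)) :=
      (AddCircle.coe_add_period (2*π) t).symm
    have hmem : t + 2*π ∈ Set.Ico (0:ℝ) (2*π) := by
      constructor
      · linarith [htc.1]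
      · linarith
    rw [h1, e_mk hmem]
    intro hicc
    linarith [hicc.2, htc.1]

lemma ext2_continuous {h : ℝ × ℝ → ℂ} (hc : Continuous h)
    (hcomp : IsCompact (tsupport h)) (hsub : tsupport h ⊆ R) : Continuous (ext2 h) := by
  obtain ⟨a₁, b₁, a₂, b₂, ⟨ha₁, hab₁, hb₁⟩, ⟨ha₂, hab₂, hb₂⟩, hbound⟩ := support_bounds hcomp hsub
  rw [continuous_iff_continuousAt]
  intro q
  by_cases hx : q.1 = ((0:ℝ) : AddCircle (2*π))
  · -- vanishes near q
    set c := min a₁ (2*π - b₁) with hcdef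
    have hcpos : 0 < c := lt_min ha₁ (by linarith)
    have hU : IsOpen ((fun t : ℝ => ((t : ℝ) : AddCircle (2*π))) '' Set.Ioo (-c) c) := by
      exact QuotientAddGroup.isOpenMap_coe _ isOpen_Ioo
    have hqU : q.1 ∈ (fun t : ℝ => ((t : ℝ) : AddCircle (2*π))) '' Set.Ioo (-c) c :=
      ⟨0, by constructor <;> simp [hcpos, neg_neg]; try linarith, by rw [hx]⟩
    have hev : ext2 h =ᶠ[nhds q] fun _ => 0 := by
      have hnb : {r : AddCircle (2*π) × AddCircle (2*π) |
          r.1 ∈ (fun t : ℝ => ((t : ℝ) : AddCircle (2*π))) '' Set.Ioo (-c) c} ∈ nhds q :=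
        (hU.preimage continuous_fst).mem_nhds hqU
      filter_upwards [hnb] with r hr
      obtain ⟨t, htc, hteq⟩ := hr
      rw [ext2]
      apply image_eq_zero_of_notMem_tsupport
      intro hmem
      have h1 := (hbound _ hmem).1
      rw [← hteq] at h1
      exact vanish_near_zero ha₁ hab₁ hb₁ hcpos (min_le_left _ _) (min_le_right _ _) htc h1
    exact (continuousAt_const (y := (0:ℂ))).congr hev.symm
  · by_cases hy : q.2 = ((0:ℝ) : AddCircle (2*π))
    · set c := min a₂ (2*π - b₂) with hcdef
      have hcpos : 0 < c := lt_min ha₂ (by linarith)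
      have hU : IsOpen ((fun t : ℝ => ((t : ℝ) : AddCircle (2*π))) '' Set.Ioo (-c) c) := by
        exact QuotientAddGroup.isOpenMap_coe _ isOpen_Ioo
      have hqU : q.2 ∈ (fun t : ℝ => ((t : ℝ) : AddCircle (2*π))) '' Set.Ioo (-c) c :=
        ⟨0, by constructor <;> simp [hcpos, neg_neg]; try linarith, by rw [hy]⟩
      have hev : ext2 h =ᶠ[nhds q] fun _ => 0 := by
        have hnb : {r : AddCircle (2*π) × AddCircle (2*π) |
            r.2 ∈ (fun t : ℝ => ((t : ℝ) : AddCircle (2*π))) '' Set.Ioo (-c) c} ∈ nhds q :=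
          (hU.preimage continuous_snd).mem_nhds hqU
        filter_upwards [hnb] with r hr
        obtain ⟨t, htc, hteq⟩ := hr
        rw [ext2]
        apply image_eq_zero_of_notMem_tsupport
        intro hmem
        have h1 := (hbound _ hmem).2
        rw [← hteq] at h1
        exact vanish_near_zero ha₂ hab₂ hb₂ hcpos (min_le_left _ _) (min_le_right _ _) htc h1
      exact (continuousAt_const (y := (0:ℂ))).congr hev.symm
    · exact hc.continuousAt.comp
        (((e_contAt hx).comp continuousAt_fst).prodMk ((e_contAt hy).comp continuousAt_snd))


def Eset : Set (ℝ × ℝ → ℂ) :=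
  {g | ∃ n : ℤ, ∃ k : ℕ, 1 ≤ k ∧
    g = fun p => Complex.exp (Complex.I * (n:ℂ) * (p.1:ℂ)) * ((Real.sin (k * p.2) : ℝ) : ℂ)}

lemma fourier_eval (n : ℤ) (t : ℝ) :
    fourier (T := 2*π) n (↑t) = Complex.exp (Complex.I * (n:ℂ) * (t:ℂ)) := by
  rw [fourier_coe_apply]
  congr 1
  have hπ : ((π:ℝ):ℂ) ≠ 0 := Complex.ofReal_ne_zero.mpr Real.pi_ne_zero
  push_cast
  field_simp

lemma exp_sub_exp (z : ℂ) :
    Complex.exp (Complex.I * z) - Complex.exp (Complex.I * (-z)) = 2 * Complex.I * Complex.sin z := by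
  rw [Complex.sin, show Complex.I * z = z * Complex.I by ring,
    show Complex.I * (-z) = -z * Complex.I by ring]
  field_simp
  linear_combination (Complex.exp (z*Complex.I) - Complex.exp (-(z*Complex.I))) * Complex.I_sq

lemma phi_mem_span {P : C(AddCircle (2*π) × AddCircle (2*π), ℂ)} (hP : P ∈ monoSpan) :
    (fun p : ℝ × ℝ => P (↑p.1, ↑p.2) - P (↑p.1, ↑(-p.2))) ∈ Submodule.span ℂ Eset := by
  induction hP using Submodule.span_induction with
  | mem x hx =>
    obtain ⟨⟨n, m⟩, rfl⟩ := hx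
    rcases lt_trichotomy m 0 with hm | hm | hm
    · -- m < 0
      have hk : 1 ≤ (-m).toNat := by omega
      have heq : (fun p : ℝ × ℝ => mono (n, m) (↑p.1, ↑p.2) - mono (n, m) (↑p.1, ↑(-p.2)))
          = (-(2*Complex.I)) • (fun p : ℝ × ℝ =>
              Complex.exp (Complex.I * (n:ℂ) * (p.1:ℂ)) * ((Real.sin ((-m).toNat * p.2) : ℝ) : ℂ)) := by
        funext p
        simp only [mono_apply, Pi.smul_apply, smul_eq_mul, fourier_eval]
        have hc : (((-m).toNat : ℕ) : ℝ) = -(m:ℝ) := by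
          have := Int.toNat_of_nonneg (by omega : (0:ℤ) ≤ -m)
          exact_mod_cast this
        have hsin : ((Real.sin (((-m).toNat : ℝ) * p.2) : ℝ) : ℂ)
            = Complex.sin ((-(m:ℂ)) * (p.2:ℂ)) := by
          rw [hc, Complex.ofReal_sin]
          push_cast
          ring_nf
        rw [hsin]
        have h1 : Complex.I * (m:ℂ) * ((p.2:ℝ):ℂ) = Complex.I * (-((-(m:ℂ)) * (p.2:ℂ))) := by ring
        have h2 : Complex.I * (m:ℂ) * ((-p.2:ℝ):ℂ) = Complex.I * ((-(m:ℂ)) * (p.2:ℂ)) := by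
          push_cast; ring
        rw [h1, h2]
        have h3 := exp_sub_exp ((-(m:ℂ)) * (p.2:ℂ))
        linear_combination (-(Complex.exp (Complex.I * (n:ℂ) * (p.1:ℂ)))) * h3
      rw [heq]
      exact Submodule.smul_mem _ _ (Submodule.subset_span ⟨n, (-m).toNat, hk, rfl⟩)
    · -- m = 0
      subst hm
      have heq : (fun p : ℝ × ℝ => mono (n, 0) (↑p.1, ↑p.2) - mono (n, 0) (↑p.1, ↑(-p.2)))
          = (0 : ℝ × ℝ → ℂ) := by
        funext p
        simp [mono_apply, fourier_eval]
      rw [heq]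
      exact Submodule.zero_mem _
    · -- m > 0
      have hk : 1 ≤ m.toNat := by omega
      have heq : (fun p : ℝ × ℝ => mono (n, m) (↑p.1, ↑p.2) - mono (n, m) (↑p.1, ↑(-p.2)))
          = (2*Complex.I) • (fun p : ℝ × ℝ =>
              Complex.exp (Complex.I * (n:ℂ) * (p.1:ℂ)) * ((Real.sin (m.toNat * p.2) : ℝ) : ℂ)) := by
        funext p
        simp only [mono_apply, Pi.smul_apply, smul_eq_mul, fourier_eval]
        have hc : ((m.toNat : ℕ) : ℝ) = (m:ℝ) := by
          have := Int.toNat_of_nonneg hm.le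
          exact_mod_cast this
        have hsin : ((Real.sin ((m.toNat : ℝ) * p.2) : ℝ) : ℂ)
            = Complex.sin ((m:ℂ) * (p.2:ℂ)) := by
          rw [hc, Complex.ofReal_sin]
          push_cast
          ring_nf
        rw [hsin]
        have h1 : Complex.I * (m:ℂ) * ((p.2:ℝ):ℂ) = Complex.I * ((m:ℂ) * (p.2:ℂ)) := by ring
        have h2 : Complex.I * (m:ℂ) * ((-p.2:ℝ):ℂ) = Complex.I * (-((m:ℂ) * (p.2:ℂ))) := by
          push_cast; ring
        rw [h1, h2]
        have h3 := exp_sub_exp ((m:ℂ) * (p.2:ℂ))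
        linear_combination (Complex.exp (Complex.I * (n:ℂ) * (p.1:ℂ))) * h3
      rw [heq]
      exact Submodule.smul_mem _ _ (Submodule.subset_span ⟨n, m.toNat, hk, rfl⟩)
  | zero =>
    have : (fun p : ℝ × ℝ => (0 : C(AddCircle (2*π) × AddCircle (2*π), ℂ)) (↑p.1, ↑p.2)
        - (0 : C(AddCircle (2*π) × AddCircle (2*π), ℂ)) (↑p.1, ↑(-p.2))) = (0 : ℝ × ℝ → ℂ) := by
      funext p; simp
    rw [this]
    exact Submodule.zero_mem _
  | add y z hy hz ihy ihz =>
    have : (fun p : ℝ × ℝ => (y + z) (↑p.1, ↑p.2) - (y + z) (↑p.1, ↑(-p.2)))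
        = (fun p : ℝ × ℝ => y (↑p.1, ↑p.2) - y (↑p.1, ↑(-p.2)))
          + (fun p : ℝ × ℝ => z (↑p.1, ↑p.2) - z (↑p.1, ↑(-p.2))) := by
      funext p
      simp only [ContinuousMap.add_apply, Pi.add_apply]
      ring
    rw [this]
    exact Submodule.add_mem _ ihy ihz
  | smul c y hy ihy =>
    have : (fun p : ℝ × ℝ => (c • y) (↑p.1, ↑p.2) - (c • y) (↑p.1, ↑(-p.2)))
        = c • (fun p : ℝ × ℝ => y (↑p.1, ↑p.2) - y (↑p.1, ↑(-p.2))) := by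
      funext p
      simp only [ContinuousMap.smul_apply, Pi.smul_apply, smul_eq_mul]
      ring
    rw [this]
    exact Submodule.smul_mem _ _ ihy


lemma nu_univ_pow_le : (ν Set.univ) ^ ((2:ℝ≥0∞).toReal⁻¹) ≤ (ENNReal.ofReal 7) := by
  have h1 : ν Set.univ ≤ ENNReal.ofReal 49 := by
    rw [ν, Measure.restrict_apply_univ, R, Measure.volume_eq_prod, Measure.prod_prod]
    rw [Real.volume_Ioo, Real.volume_Ioo, sub_zero, sub_zero,
      ← ENNReal.ofReal_mul (by linarith [Real.pi_pos] : (0:ℝ) ≤ 2*π)]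
    apply ENNReal.ofReal_le_ofReal
    have hpi := Real.pi_lt_d2
    have hpi2 := Real.pi_pos
    nlinarith
  calc (ν Set.univ) ^ ((2:ℝ≥0∞).toReal⁻¹) ≤ (ENNReal.ofReal 49) ^ ((2:ℝ≥0∞).toReal⁻¹) := by
        exact ENNReal.rpow_le_rpow h1 (by norm_num)
    _ = ENNReal.ofReal 7 := by
        rw [ENNReal.ofReal_rpow_of_pos (by norm_num)]
        congr 1
        rw [show ((2:ℝ≥0∞)).toReal⁻¹ = ((2:ℝ))⁻¹ by norm_num]
        rw [show (49:ℝ) = 7^(2:ℕ) by norm_num, ← Real.rpow_natCast 7 2,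
          ← Real.rpow_mul (by norm_num)]
        norm_num

lemma main_nu {F : ℝ × ℝ → ℂ} (hF : MemLp F 2 ν) {d : ℝ} (hd : 0 < d) :
    ∃ G, G ∈ Submodule.span ℂ Eset ∧ Continuous G ∧
      eLpNorm (F - G) 2 ν ≤ ENNReal.ofReal d := by
  obtain ⟨h, ⟨hc, hcomp, hsub⟩, hFh⟩ := exists_cont_approx hF
    (ε := ENNReal.ofReal (d/2)) (ENNReal.ofReal_pos.mpr (by linarith)).ne'
  set H : C(AddCircle (2*π) × AddCircle (2*π), ℂ) :=
    ⟨ext2 h, ext2_continuous hc hcomp hsub⟩ with hHdef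
  obtain ⟨P, hP, hPdist⟩ := monoSpan_dense H (τ := d/28) (by positivity)
  set Q : ℝ × ℝ → ℂ := fun p => P (↑p.1, ↑p.2) - P (↑p.1, ↑(-p.2)) with hQdef
  have hQspan : Q ∈ Submodule.span ℂ Eset := phi_mem_span hP
  have hmkc : Continuous (fun t : ℝ => ((t : ℝ) : AddCircle (2*π))) :=
    AddCircle.continuous_mk' (2*π)
  have hQcont : Continuous Q := by
    apply Continuous.sub
    · exact P.continuous.comp ((hmkc.comp continuous_fst).prodMk (hmkc.comp continuous_snd))
    · exact P.continuous.comp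
        ((hmkc.comp continuous_fst).prodMk (hmkc.comp (continuous_neg.comp continuous_snd)))
  have hbound : ∀ᵐ p ∂ν, ‖(fun p => h p - Q p) p‖ ≤ 2*(d/28) := by
    filter_upwards [ae_mem_R] with p hp
    have hpi := Real.pi_gt_three
    have h1 : H (↑p.1, ↑p.2) = h p := by
      have := ext2_eval h (lam := p.1) (θ := p.2)
        ⟨hp.1.1.le, hp.1.2⟩ ⟨hp.2.1.le, by have := hp.2.2; linarith⟩
      exact this
    have h2 : H (↑p.1, ↑(-p.2)) = 0 := ext2_neg_eval h hsub _ hp.2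
    have hb1 := hPdist (↑p.1, ↑p.2)
    have hb2 := hPdist (↑p.1, ↑(-p.2))
    have heq : h p - Q p = (H (↑p.1, ↑p.2) - P (↑p.1, ↑p.2))
        - (H (↑p.1, ↑(-p.2)) - P (↑p.1, ↑(-p.2))) := by
      rw [h1, h2, hQdef]
      ring
    calc ‖h p - Q p‖ = ‖(H (↑p.1, ↑p.2) - P (↑p.1, ↑p.2))
          - (H (↑p.1, ↑(-p.2)) - P (↑p.1, ↑(-p.2)))‖ := by rw [heq]
      _ ≤ ‖H (↑p.1, ↑p.2) - P (↑p.1, ↑p.2)‖ + ‖H (↑p.1, ↑(-p.2)) - P (↑p.1, ↑(-p.2))‖ :=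
          norm_sub_le _ _
      _ ≤ d/28 + d/28 := add_le_add hb1 hb2
      _ = 2*(d/28) := by ring
  have hhQ : eLpNorm (fun p => h p - Q p) 2 ν ≤ ENNReal.ofReal (d/2) := by
    refine le_trans (eLpNorm_le_of_ae_bound hbound) ?_
    calc ν Set.univ ^ ((2:ℝ≥0∞).toReal⁻¹) * ENNReal.ofReal (2*(d/28))
        ≤ ENNReal.ofReal 7 * ENNReal.ofReal (2*(d/28)) :=
          mul_le_mul_left nu_univ_pow_le _
      _ = ENNReal.ofReal (7 * (2*(d/28))) := (ENNReal.ofReal_mul (by norm_num)).symm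
      _ = ENNReal.ofReal (d/2) := by rw [show (7:ℝ) * (2*(d/28)) = d/2 by ring]
  refine ⟨Q, hQspan, hQcont, ?_⟩
  have hsplit : F - Q = (F - h) + (fun p => h p - Q p) := by
    funext p
    simp [Pi.sub_apply, Pi.add_apply]
  rw [hsplit]
  calc eLpNorm ((F - h) + (fun p => h p - Q p)) 2 ν
      ≤ eLpNorm (F - h) 2 ν + eLpNorm (fun p => h p - Q p) 2 ν :=
        eLpNorm_add_le (hF.aestronglyMeasurable.sub hc.aestronglyMeasurable)
          (hc.aestronglyMeasurable.sub hQcont.aestronglyMeasurable) one_le_two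
    _ ≤ ENNReal.ofReal (d/2) + ENNReal.ofReal (d/2) := add_le_add hFh hhQ
    _ = ENNReal.ofReal d := by
        rw [← ENNReal.ofReal_add (by linarith) (by linarith)]
        norm_num

lemma bridge {G : ℝ × ℝ → ℂ} (hG : G ∈ Submodule.span ℂ Eset) :
    ∃ g ∈ Submodule.span ℂ
        {g : ℝ × ℝ → ℂ | ∃ n : ℤ, ∃ k : ℕ, 1 ≤ k ∧ g = sphericalTrigFun n k},
      (fun p => sq p * g p) =ᵐ[ν] G := by
  induction hG using Submodule.span_induction with
  | mem x hx =>
    obtain ⟨n, k, hk, rfl⟩ := hx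
    refine ⟨((π:ℝ):ℂ) • sphericalTrigFun n k,
      Submodule.smul_mem _ _ (Submodule.subset_span ⟨n, k, hk, rfl⟩), ?_⟩
    filter_upwards [ae_sin_pos] with p hp
    have hsq : Real.sqrt (Real.sin p.2) ≠ 0 := (Real.sqrt_pos.mpr hp).ne'
    have hsqC : ((Real.sqrt (Real.sin p.2) : ℝ) : ℂ) ≠ 0 := Complex.ofReal_ne_zero.mpr hsq
    have hπ : ((π:ℝ):ℂ) ≠ 0 := Complex.ofReal_ne_zero.mpr Real.pi_ne_zero
    simp only [Pi.smul_apply, smul_eq_mul, sphericalTrigFun, sq]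
    field_simp
  | zero =>
    exact ⟨0, Submodule.zero_mem _, by
      filter_upwards with p
      simp⟩
  | add y z hy hz ihy ihz =>
    obtain ⟨g₁, hg₁, he₁⟩ := ihy
    obtain ⟨g₂, hg₂, he₂⟩ := ihz
    refine ⟨g₁ + g₂, Submodule.add_mem _ hg₁ hg₂, ?_⟩
    filter_upwards [he₁, he₂] with p h1 h2
    simp only [Pi.add_apply, mul_add, h1, h2]
  | smul c y hy ihy =>
    obtain ⟨g₁, hg₁, he₁⟩ := ihy
    refine ⟨c • g₁, Submodule.smul_mem _ _ hg₁, ?_⟩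
    filter_upwards [he₁] with p h1
    simp only [Pi.smul_apply, smul_eq_mul]
    rw [← h1]
    ring

end SphAux

/-- The linear span of the family `{B_{n,k} : n ∈ ℤ, k ≥ 1}` is dense in the Hilbert space
`L²((0,2π) × (0,π), sin θ dλ dθ)`; together with their orthonormality, these functions
form an orthonormal basis of this space (which is isometrically `L²` of the
two-dimensional unit sphere in spherical coordinates). -/
theorem sphericalTrigFun_span_dense
    (f : ℝ × ℝ → ℂ) (hf : MemLp f 2 sphericalCoordMeasure) (ε : ℝ) (hε : 0 < ε) :
    ∃ g ∈ Submodule.span ℂ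
        {g : ℝ × ℝ → ℂ | ∃ n : ℤ, ∃ k : ℕ, 1 ≤ k ∧ g = sphericalTrigFun n k},
      eLpNorm (f - g) 2 sphericalCoordMeasure < ENNReal.ofReal ε := by
  have hF : MemLp (fun p => SphAux.sq p * f p) 2 SphAux.ν := SphAux.memLp_transfer hf
  obtain ⟨G, hGspan, hGcont, hFG⟩ := SphAux.main_nu hF (d := ε/2) (by linarith)
  obtain ⟨g, hgspan, hae⟩ := SphAux.bridge hGspan
  refine ⟨g, hgspan, ?_⟩
  have h1 : eLpNorm (f - g) 2 sphericalCoordMeasure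
      = eLpNorm (fun p => SphAux.sq p * (f - g) p) 2 SphAux.ν :=
    SphAux.eLpNorm_transfer (f - g)
  rw [h1]
  have h2 : (fun p => SphAux.sq p * (f - g) p)
      =ᵐ[SphAux.ν] ((fun p => SphAux.sq p * f p) - G) := by
    filter_upwards [hae] with p hp
    simp only [Pi.sub_apply, mul_sub]
    rw [hp]
  rw [eLpNorm_congr_ae h2]
  refine lt_of_le_of_lt hFG ?_
  rw [ENNReal.ofReal_lt_ofReal_iff hε]
  linarith
end

section
/- For every natural number m, with double factorials (2m−1)!! and (2m)!! (and the convention (−1)!! = 1), one has 1/2 ≤ (2m + 1/2) · ( (2m−1)!! / (2m)!! )² ≤ 2/π. Equivalently, for every even ℓ ≥ 0, √(1/2) · (ℓ+1/2)^{−1/2} ≤ (ℓ−1)!!/ℓ!! ≤ √(2/π) · (ℓ+1/2)^{−1/2}. -/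
open Real Nat Filter

/-- The quantity `(2m + 1/2) ((2m−1)!!/(2m)!!)²`. -/
noncomputable def frEig (m : ℕ) : ℝ :=
  (2 * (m : ℝ) + 1 / 2) *
    ((Nat.doubleFactorial (2 * m - 1) : ℝ) / (Nat.doubleFactorial (2 * m) : ℝ)) ^ 2

lemma dF_odd_mul_even (m : ℕ) :
    ((2 * m - 1).doubleFactorial : ℝ) * ((2 * m).doubleFactorial : ℝ) = (2 * m)! := by
  cases m with
  | zero => simp
  | succ n =>
    have h : 2 * (n + 1) - 1 + 1 = 2 * (n + 1) := by omega
    have h2 := Nat.factorial_eq_mul_doubleFactorial (2 * (n + 1) - 1)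
    rw [h] at h2
    rw [h2]
    push_cast
    ring

lemma frEig_eq_W (m : ℕ) :
    frEig m = (2 * (m : ℝ) + 1 / 2) / ((2 * m + 1) * Real.Wallis.W m) := by
  have hW : (0 : ℝ) < Real.Wallis.W m := Real.Wallis.W_pos m
  have hd2 : (0 : ℝ) < ((2 * m).doubleFactorial : ℝ) := by
    exact_mod_cast (2 * m).doubleFactorial_pos
  have hdf : ((2 * m).doubleFactorial : ℝ) = 2 ^ m * (m ! : ℝ) := by
    exact_mod_cast Nat.doubleFactorial_two_mul m
  have hfac : (0 : ℝ) < ((2 * m)! : ℝ) := by exact_mod_cast (2 * m).factorial_pos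
  have hm : (0 : ℝ) < (m ! : ℝ) := by exact_mod_cast m.factorial_pos
  have hWe : Real.Wallis.W m
      = 2 ^ (4 * m) * (m ! : ℝ) ^ 4 / (((2 * m)! : ℝ) ^ 2 * (2 * m + 1)) :=
    Real.Wallis.W_eq_factorial_ratio m
  have hodd := dF_odd_mul_even m
  have hr : (((2 * m - 1).doubleFactorial : ℝ) / ((2 * m).doubleFactorial : ℝ)) ^ 2
      = ((2 * m)! : ℝ) ^ 2 / (2 ^ (4 * m) * (m ! : ℝ) ^ 4) := by
    have step1 : (((2 * m - 1).doubleFactorial : ℝ) / ((2 * m).doubleFactorial : ℝ)) ^ 2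
        = (((2 * m - 1).doubleFactorial : ℝ) * ((2 * m).doubleFactorial : ℝ)) ^ 2
          / (((2 * m).doubleFactorial : ℝ) ^ 2) ^ 2 := by
      field_simp
    rw [step1, hodd, hdf]
    congr 1
    ring
  rw [frEig, hr, hWe]
  rw [eq_div_iff (by positivity)]
  field_simp

lemma frEig_mono : Monotone frEig := by
  apply monotone_nat_of_le_succ
  intro m
  have hW : (0 : ℝ) < Real.Wallis.W m := Real.Wallis.W_pos m
  have hx : (0 : ℝ) ≤ (m : ℝ) := Nat.cast_nonneg m
  have hWs : Real.Wallis.W (m + 1)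
      = Real.Wallis.W m * (2 * (m : ℝ) + 2) ^ 2 / ((2 * m + 1) * (2 * m + 3)) := by
    have hq : (2 * (m:ℝ) + 2) / (2 * m + 1) * ((2 * m + 2) / (2 * m + 3))
        = (2 * (m:ℝ) + 2) ^ 2 / ((2 * m + 1) * (2 * m + 3)) := by
      rw [eq_div_iff (by positivity), _root_.div_mul_div_comm, div_mul_eq_mul_div,
        div_eq_iff (by positivity)]
      ring
    rw [Real.Wallis.W_succ, hq, mul_div_assoc]
  have ha : frEig (m + 1)
      = (2 * (m : ℝ) + 5 / 2) * (2 * m + 1) / (Real.Wallis.W m * (2 * m + 2) ^ 2) := by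
    rw [frEig_eq_W, hWs]
    push_cast
    rw [div_eq_div_iff (by positivity) (by positivity)]
    field_simp
    ring
  rw [frEig_eq_W m, ha, div_le_div_iff₀ (by positivity) (by positivity)]
  nlinarith [hW, hx, mul_nonneg hW.le hx, mul_nonneg (mul_nonneg hW.le hx) hx]

lemma frEig_tendsto : Tendsto frEig atTop (nhds (2 / π)) := by
  have hA : Tendsto (fun m : ℕ => (2 * (m : ℝ) + 1)) atTop atTop := by
    apply tendsto_atTop_add_const_right
    exact (tendsto_natCast_atTop_atTop (R := ℝ)).const_mul_atTop two_pos
  have hB : Tendsto (fun m : ℕ => (2 * (m : ℝ) + 1)⁻¹) atTop (nhds 0) :=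
    hA.inv_tendsto_atTop
  have h1 : Tendsto (fun m : ℕ => (2 * (m : ℝ) + 1 / 2) / (2 * m + 1)) atTop (nhds 1) := by
    have h1' : Tendsto (fun m : ℕ => 1 - 1 / 2 * (2 * (m : ℝ) + 1)⁻¹) atTop
        (nhds (1 - 1 / 2 * 0)) := tendsto_const_nhds.sub (hB.const_mul _)
    rw [show (1 : ℝ) - 1 / 2 * 0 = 1 by norm_num] at h1'
    refine h1'.congr fun m => ?_
    have h : (2 * (m : ℝ) + 1) ≠ 0 := by positivity
    rw [eq_div_iff h]
    field_simp
    ring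
  have h2 : Tendsto (fun m : ℕ => (Real.Wallis.W m)⁻¹) atTop (nhds (π / 2)⁻¹) :=
    Real.Wallis.tendsto_W_nhds_pi_div_two.inv₀ (by positivity)
  have h3 := h1.mul h2
  rw [show (1 : ℝ) * (π / 2)⁻¹ = 2 / π by rw [one_mul, inv_div]] at h3
  refine h3.congr fun m => ?_
  rw [frEig_eq_W, ← div_div]
  ring

/-- Two-sided bound for the Funk–Radon eigenvalues: for every `m ∈ ℕ`,
`1/2 ≤ (2m + 1/2) ((2m−1)!!/(2m)!!)² ≤ 2/π`
(with the convention `(−1)!! = 1`, realized by `0‼ = 1` and truncated subtraction). -/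
theorem funk_radon_eigenvalue_bounds (m : ℕ) :
    1 / 2 ≤ (2 * (m : ℝ) + 1 / 2) *
        ((Nat.doubleFactorial (2 * m - 1) : ℝ) / (Nat.doubleFactorial (2 * m) : ℝ)) ^ 2 ∧
      (2 * (m : ℝ) + 1 / 2) *
        ((Nat.doubleFactorial (2 * m - 1) : ℝ) / (Nat.doubleFactorial (2 * m) : ℝ)) ^ 2
      ≤ 2 / π := by
  constructor
  · have h := frEig_mono (Nat.zero_le m)
    have h0 : frEig 0 = 1 / 2 := by norm_num [frEig]
    rw [h0] at h
    exact h
  · exact frEig_mono.ge_of_tendsto frEig_tendsto m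
end

section
/- The sequence m ↦ (2m + 1/2) · ( (2m−1)!! / (2m)!! )², m ∈ ℕ, is monotonically increasing: for every m, (2m + 1/2) · ((2m−1)!!/(2m)!!)² ≤ (2m + 5/2) · ((2m+1)!!/(2m+2)!!)². -/
open Real Nat

/-! Passing from `m` to `m + 1` multiplies the ratio `r = (2m−1)‼ / (2m)‼` by `(2m+1)/(2m+2)`,
so with `x = 2m` the claim is `(x + 1/2) r² ≤ (x + 5/2) r² (x+1)²/(x+2)²`, which follows from the
polynomial identity `(x + 5/2)(x + 1)² = (x + 1/2)(x + 2)² + 1/2`. -/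

theorem add_half_mul_sq_le_add_five_halves_mul_sq (x r : ℝ) (hx : 0 < x + 2) :
    (x + 1 / 2) * r ^ 2 ≤ (x + 5 / 2) * (r * (x + 1) / (x + 2)) ^ 2 := by
  have hx' : (x + 2) ^ 2 ≠ 0 := by positivity
  calc (x + 1 / 2) * r ^ 2
      ≤ (x + 1 / 2) * r ^ 2 + r ^ 2 / (2 * (x + 2) ^ 2) := le_add_of_nonneg_right (by positivity)
    _ = (x + 5 / 2) * (r * (x + 1) / (x + 2)) ^ 2 := by field_simp; ring

theorem doubleFactorial_odd_div_even_succ (m : ℕ) :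
    ((2 * m + 1)‼ : ℝ) / (2 * m + 2)‼ = ((2 * m - 1)‼ / (2 * m)‼) * (2 * m + 1) / (2 * m + 2) := by
  rw [doubleFactorial_add_one, doubleFactorial_add_two]
  push_cast
  rw [mul_div_mul_comm]
  ring

/-- Monotonicity of the sequence `m ↦ (2m + 1/2) ((2m−1)!!/(2m)!!)²`:
each term is bounded by the next one, `(2m + 5/2) ((2m+1)!!/(2m+2)!!)²`. -/
theorem funk_radon_eigenvalue_seq_monotone (m : ℕ) :
    (2 * (m : ℝ) + 1 / 2) *
        ((Nat.doubleFactorial (2 * m - 1) : ℝ) / (Nat.doubleFactorial (2 * m) : ℝ)) ^ 2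
      ≤ (2 * (m : ℝ) + 5 / 2) *
        ((Nat.doubleFactorial (2 * m + 1) : ℝ) / (Nat.doubleFactorial (2 * m + 2) : ℝ)) ^ 2 := by
  rw [doubleFactorial_odd_div_even_succ]
  exact add_half_mul_sq_le_add_five_halves_mul_sq _ _ (by positivity)
end

section
/- Let X be a complex Hilbert space and (e_k)_{k∈ℕ} a frame over X with frame bounds B₁, B₂ > 0. Then there exists a dual frame (ẽ_k)_{k∈ℕ}: a sequence in X which is itself a frame with frame bounds B₂^{−1} and B₁^{−1}, and such that for every x ∈ X both reconstruction formulas hold: x = Σ_{k∈ℕ} ⟨x, ẽ_k⟩ e_k and x = Σ_{k∈ℕ} ⟨x, e_k⟩ ẽ_k (the series converging in X). -/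
open scoped InnerProduct ComplexConjugate
noncomputable section

abbrev H2 : Type := lp (fun _ : ℕ => ℂ) 2

def Tmap {X : Type*} [NormedAddCommGroup X] [InnerProductSpace ℂ X] (e : ℕ → X) (hsum : ∀ x : X, Summable (fun k => ‖(inner ℂ (e k) x : ℂ)‖ ^ 2)) :
    X →ₗ[ℂ] H2 where
  toFun x := ⟨fun k => (inner ℂ (e k) x : ℂ), by
    apply memℓp_gen
    simpa [Real.rpow_natCast] using hsum x⟩
  map_add' x y := by ext k; simp [inner_add_right]; rfl
  map_smul' c x := by ext k; simp [inner_smul_right]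

set_option maxHeartbeats 2000000 in
/-- Existence of the dual frame: if `(e_k)` is a frame over a complex Hilbert space `X`
with frame bounds `B₁, B₂ > 0`, then there exists a sequence `(ẽ_k)` which is itself a
frame with frame bounds `B₂⁻¹, B₁⁻¹`, and such that both reconstruction formulas
`x = Σ_k ⟨x, ẽ_k⟩ e_k` and `x = Σ_k ⟨x, e_k⟩ ẽ_k` hold for every `x ∈ X`. -/
theorem exists_dual_frame
    {X : Type*} [NormedAddCommGroup X] [InnerProductSpace ℂ X] [CompleteSpace X]
    (e : ℕ → X) (B₁ B₂ : ℝ) (hB₁ : 0 < B₁) (hB₂ : 0 < B₂)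
    (hframe : ∀ x : X, Summable (fun k => ‖(inner ℂ (e k) x : ℂ)‖ ^ 2) ∧
      B₁ * ‖x‖ ^ 2 ≤ ∑' k, ‖(inner ℂ (e k) x : ℂ)‖ ^ 2 ∧
      ∑' k, ‖(inner ℂ (e k) x : ℂ)‖ ^ 2 ≤ B₂ * ‖x‖ ^ 2) :
    ∃ ed : ℕ → X,
      (∀ x : X, Summable (fun k => ‖(inner ℂ (ed k) x : ℂ)‖ ^ 2) ∧
        B₂⁻¹ * ‖x‖ ^ 2 ≤ ∑' k, ‖(inner ℂ (ed k) x : ℂ)‖ ^ 2 ∧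
        ∑' k, ‖(inner ℂ (ed k) x : ℂ)‖ ^ 2 ≤ B₁⁻¹ * ‖x‖ ^ 2) ∧
      ∀ x : X, HasSum (fun k => (inner ℂ (ed k) x : ℂ) • e k) x ∧
        HasSum (fun k => (inner ℂ (e k) x : ℂ) • ed k) x := by
  have hsum := fun x => (hframe x).1
  set T : X →L[ℂ] H2 := (Tmap e hsum).mkContinuous (Real.sqrt B₂) (by
    intro x
    have hnorm : ‖Tmap e hsum x‖ ^ 2 = ∑' k, ‖(inner ℂ (e k) x : ℂ)‖ ^ 2 := by
      have := lp.norm_rpow_eq_tsum (p := 2) (by norm_num) (Tmap e hsum x)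
      simp [Real.rpow_natCast] at this; exact this
    have h2 : ‖Tmap e hsum x‖ ^ 2 ≤ (Real.sqrt B₂ * ‖x‖) ^ 2 := by
      rw [hnorm, mul_pow, Real.sq_sqrt hB₂.le]
      exact (hframe x).2.2
    exact (abs_le_of_sq_le_sq' h2 (by positivity)).2) with hT
  -- norm of T
  have hTnorm : ‖T‖ ≤ Real.sqrt B₂ :=
    (Tmap e hsum).mkContinuous_norm_le (Real.sqrt_nonneg B₂) _
  have hTapply : ∀ (x : X) (k : ℕ), (T x : ∀ _ : ℕ, ℂ) k = inner ℂ (e k) x := fun x k => rfl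
  set S : X →L[ℂ] X := (ContinuousLinearMap.adjoint T).comp T with hS
  -- adjoint on singles
  have hadj_single : ∀ (k : ℕ) (c : ℂ),
      (ContinuousLinearMap.adjoint T) (lp.single 2 k c) = c • e k := by
    intro k c
    apply ext_inner_right ℂ
    intro x
    rw [ContinuousLinearMap.adjoint_inner_left]
    rw [lp.inner_single_left]
    simp [hTapply, inner_smul_left, mul_comm]
  -- key HasSum
  have keyS : ∀ y : X, HasSum (fun k => (inner ℂ (e k) y : ℂ) • e k) (S y) := by
    intro y
    have h1 : HasSum (fun k => lp.single 2 k ((T y : ∀ _ : ℕ, ℂ) k)) (T y) :=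
      lp.hasSum_single (by norm_num) (T y)
    have h2 := h1.mapL (ContinuousLinearMap.adjoint T)
    exact (by simpa [hadj_single, hTapply] using h2 : HasSum _ ((ContinuousLinearMap.adjoint T) (T y)))
  -- tsum identity
  have hinner : ∀ y : X, HasSum (fun k => ((‖(inner ℂ (e k) y : ℂ)‖ : ℂ) ^ 2)) (inner ℂ y (S y) : ℂ) := by
    intro y
    have h := (keyS y).mapL (innerSL ℂ y)
    have : ∀ k, (innerSL ℂ y) ((inner ℂ (e k) y : ℂ) • e k) = (‖(inner ℂ (e k) y : ℂ)‖ : ℂ) ^ 2 := by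
      intro k
      simp only [innerSL_apply_apply, inner_smul_right]
      rw [← inner_conj_symm]
      rw [Complex.conj_mul']
      norm_cast
      rw [RCLike.norm_conj]
    simpa [this] using h
  have hre : ∀ y : X, ∑' k, ‖(inner ℂ (e k) y : ℂ)‖ ^ 2 = Complex.re (inner ℂ y (S y) : ℂ) := by
    intro y
    have h := (hinner y).mapL Complex.reCLM
    have heq : ∀ k, Complex.reCLM ((‖(inner ℂ (e k) y : ℂ)‖ : ℂ) ^ 2) = ‖(inner ℂ (e k) y : ℂ)‖ ^ 2 := by
      intro k; norm_cast
    rw [← (by simpa [← Complex.ofReal_pow] using h : HasSum (fun k => ‖(inner ℂ (e k) y : ℂ)‖ ^ 2)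
      (Complex.re (inner ℂ y (S y) : ℂ))).tsum_eq]
  have hTy : ∀ y : X, ‖T y‖ ^ 2 = Complex.re (inner ℂ y (S y) : ℂ) := by
    intro y
    have h1 : (inner ℂ y (S y) : ℂ) = inner ℂ (T y) (T y) := by
      rw [hS]; exact (ContinuousLinearMap.adjoint_inner_right T y (T y)).trans rfl
    rw [h1, ← RCLike.re_to_complex]; exact norm_sq_eq_re_inner (𝕜 := ℂ) (T y)
  have hlow : ∀ y : X, B₁ * ‖y‖ ^ 2 ≤ Complex.re (inner ℂ y (S y) : ℂ) := fun y =>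
    (hre y) ▸ (hframe y).2.1
  have hSlow : ∀ y : X, B₁ * ‖y‖ ≤ ‖S y‖ := by
    intro y
    rcases eq_or_ne ‖y‖ 0 with h0 | h0
    · simp [h0]
    have hpos : 0 < ‖y‖ := lt_of_le_of_ne (norm_nonneg y) (Ne.symm h0)
    have h1 : B₁ * ‖y‖ ^ 2 ≤ ‖y‖ * ‖S y‖ :=
      (hlow y).trans (by rw [← RCLike.re_to_complex]; exact re_inner_le_norm y (S y))
    nlinarith
  have hSsq : ∀ y : X, ‖S y‖ ^ 2 ≤ B₂ * Complex.re (inner ℂ y (S y) : ℂ) := by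
    intro y
    have h1 : ‖S y‖ ≤ Real.sqrt B₂ * ‖T y‖ := by
      have h2 : ‖(ContinuousLinearMap.adjoint T) (T y)‖ ≤ ‖ContinuousLinearMap.adjoint T‖ * ‖T y‖ :=
        (ContinuousLinearMap.adjoint T).le_opNorm (T y)
      have h3 : ‖ContinuousLinearMap.adjoint T‖ = ‖T‖ :=
        ContinuousLinearMap.adjoint.norm_map T
      calc ‖S y‖ = ‖(ContinuousLinearMap.adjoint T) (T y)‖ := rfl
        _ ≤ ‖T‖ * ‖T y‖ := h3 ▸ h2
        _ ≤ Real.sqrt B₂ * ‖T y‖ := by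
            exact mul_le_mul_of_nonneg_right hTnorm (norm_nonneg _)
    have h4 : ‖S y‖ ^ 2 ≤ B₂ * ‖T y‖ ^ 2 := by
      have := mul_self_le_mul_self (norm_nonneg (S y)) h1
      calc ‖S y‖ ^ 2 ≤ (Real.sqrt B₂ * ‖T y‖) ^ 2 := by nlinarith [norm_nonneg (S y), Real.sqrt_nonneg B₂, norm_nonneg (T y)]
        _ = B₂ * ‖T y‖ ^ 2 := by rw [mul_pow, Real.sq_sqrt hB₂.le]
    rwa [hTy y] at h4
  -- injectivity and surjectivity
  have hker : S.ker = ⊥ := by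
    rw [LinearMap.ker_eq_bot']
    intro y hy
    have := hSlow y
    rw [show S y = 0 from hy, norm_zero] at this
    have : ‖y‖ ≤ 0 := by nlinarith
    exact norm_eq_zero.1 (le_antisymm this (norm_nonneg y))
  have hclosed : IsClosed (Set.range S) := by
    have hanti : AntilipschitzWith (⟨B₁, hB₁.le⟩ : NNReal)⁻¹ S := by
      apply ContinuousLinearMap.antilipschitz_of_bound
      intro x
      show ‖x‖ ≤ B₁⁻¹ * ‖S x‖
      rw [inv_mul_eq_div, le_div_iff₀ hB₁]
      nlinarith [hSlow x]
    exact hanti.isClosed_range S.uniformContinuous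
  have hrange : S.range = ⊤ := by
    have hdense : S.range.topologicalClosure = ⊤ := by
      rw [Submodule.topologicalClosure_eq_top_iff, Submodule.eq_bot_iff]
      intro x hx
      have hx' : (inner ℂ (S x) x : ℂ) = 0 :=
        (Submodule.mem_orthogonal _ x).1 hx (S x) (LinearMap.mem_range_self _ x)
      have hre0 : Complex.re (inner ℂ x (S x) : ℂ) = 0 := by
        rw [← inner_conj_symm, hx']; simp
      have := hlow x
      rw [hre0] at this
      have hx2 : ‖x‖ ^ 2 = 0 := le_antisymm (by nlinarith) (sq_nonneg _)
      exact norm_eq_zero.1 (pow_eq_zero_iff (by norm_num) |>.1 hx2)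
    refine le_antisymm le_top ?_
    rw [← hdense]
    exact S.range.topologicalClosure_minimal le_rfl (by rw [LinearMap.coe_range]; exact hclosed)
  set Se : X ≃L[ℂ] X := ContinuousLinearEquiv.ofBijective S hker hrange with hSe
  have hSeapp : ∀ z : X, S (Se.symm z) = z := fun z =>
    ContinuousLinearEquiv.ofBijective_apply_symm_apply S hker hrange z
  have hSesymm : ∀ z : X, Se.symm (S z) = z := fun z =>
    ContinuousLinearEquiv.ofBijective_symm_apply_apply S hker hrange z
  have hSa : ∀ a b : X, (inner ℂ (S a) b : ℂ) = inner ℂ a (S b) := by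
    intro a b
    rw [hS]
    calc (inner ℂ ((ContinuousLinearMap.adjoint T).comp T a) b : ℂ)
        = inner ℂ (T a) (T b) := ContinuousLinearMap.adjoint_inner_left T b (T a)
      _ = inner ℂ a ((ContinuousLinearMap.adjoint T).comp T b) :=
          (ContinuousLinearMap.adjoint_inner_right T a (T b)).symm
  have hinv_adj : ∀ a b : X, (inner ℂ (Se.symm a) b : ℂ) = inner ℂ a (Se.symm b) := by
    intro a b
    conv_lhs => rw [← hSeapp b]
    rw [← hSa, hSeapp]
  set ed : ℕ → X := fun k => Se.symm (e k) with hed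
  have hedx : ∀ (x : X) (k : ℕ), (inner ℂ (ed k) x : ℂ) = inner ℂ (e k) (Se.symm x) :=
    fun x k => hinv_adj (e k) x
  refine ⟨ed, ?_, ?_⟩
  · intro x
    set y := Se.symm x with hy
    have hfun : (fun k => ‖(inner ℂ (ed k) x : ℂ)‖ ^ 2) = fun k => ‖(inner ℂ (e k) y : ℂ)‖ ^ 2 := by
      funext k; rw [hedx]
    have hxy : S y = x := hSeapp x
    have htsum : ∑' k, ‖(inner ℂ (ed k) x : ℂ)‖ ^ 2 = Complex.re (inner ℂ y x : ℂ) := by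
      rw [hfun, hre y, hxy]
    refine ⟨hfun ▸ (hframe y).1, ?_, ?_⟩
    · rw [htsum, inv_mul_le_iff₀ hB₂]
      calc ‖x‖ ^ 2 = ‖S y‖ ^ 2 := by rw [hxy]
        _ ≤ B₂ * Complex.re (inner ℂ y (S y) : ℂ) := hSsq y
        _ = B₂ * Complex.re (inner ℂ y x : ℂ) := by rw [hxy]
    · rw [htsum]
      have h1 : Complex.re (inner ℂ y x : ℂ) ≤ ‖y‖ * ‖x‖ := by
        rw [← RCLike.re_to_complex]; exact re_inner_le_norm y x
      have h2 : B₁ * ‖y‖ ≤ ‖x‖ := hxy ▸ hSlow y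
      rw [inv_mul_eq_div, le_div_iff₀ hB₁]
      nlinarith [norm_nonneg x, norm_nonneg y]
  · intro x
    constructor
    · have h := keyS (Se.symm x)
      rw [hSeapp x] at h
      have hfx : (fun k => (inner ℂ (ed k) x : ℂ) • e k)
          = fun k => (inner ℂ (e k) (Se.symm x) : ℂ) • e k := by
        funext k; rw [hedx]
      rw [hfx]
      exact h
    · have h := (keyS x).mapL (Se.symm : X →L[ℂ] X)
      have hterm : ∀ k, (Se.symm : X →L[ℂ] X) ((inner ℂ (e k) x : ℂ) • e k)
          = (inner ℂ (e k) x : ℂ) • ed k := by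
        intro k
        simp [hed]
      rw [show (Se.symm : X →L[ℂ] X) (S x) = x from hSesymm x] at h
      exact (funext hterm : _) ▸ h
end
end

section
/- Let X be a complex Hilbert space and (e_k)_{k∈ℕ} a frame over X with frame bounds B₁, B₂ > 0. Then for every x ∈ X the series Sx := Σ_{k∈ℕ} ⟨x, e_k⟩ e_k converges in X, the resulting map S : X → X is a bounded linear operator satisfying B₁‖x‖² ≤ Re⟨Sx, x⟩ ≤ B₂‖x‖² for all x ∈ X (in fact ⟨Sx,x⟩ = Σ_k |⟨x,e_k⟩|² is real), and S is bijective with bounded inverse. -/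
/-- The frame operator: if `(e_k)` is a frame over a complex Hilbert space `X` with
frame bounds `B₁, B₂ > 0`, then `Sx := Σ_k ⟨x, e_k⟩ e_k` converges for every `x`,
defines a bounded linear operator `S : X → X` with
`B₁‖x‖² ≤ Re⟨Sx, x⟩ ≤ B₂‖x‖²` (in fact `⟨Sx, x⟩ = Σ_k |⟨x, e_k⟩|²` is real),
and `S` is bijective with a bounded inverse. -/
theorem frame_operator_bounded_invertible
    {X : Type*} [NormedAddCommGroup X] [InnerProductSpace ℂ X] [CompleteSpace X]
    (e : ℕ → X) (B₁ B₂ : ℝ) (hB₁ : 0 < B₁) (hB₂ : 0 < B₂)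
    (hframe : ∀ x : X, Summable (fun k => ‖(inner ℂ (e k) x : ℂ)‖ ^ 2) ∧
      B₁ * ‖x‖ ^ 2 ≤ ∑' k, ‖(inner ℂ (e k) x : ℂ)‖ ^ 2 ∧
      ∑' k, ‖(inner ℂ (e k) x : ℂ)‖ ^ 2 ≤ B₂ * ‖x‖ ^ 2) :
    ∃ S : X →L[ℂ] X,
      (∀ x : X, HasSum (fun k => (inner ℂ (e k) x : ℂ) • e k) (S x)) ∧
      (∀ x : X, (inner ℂ x (S x) : ℂ) = ((∑' k, ‖(inner ℂ (e k) x : ℂ)‖ ^ 2 : ℝ) : ℂ) ∧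
        B₁ * ‖x‖ ^ 2 ≤ (inner ℂ x (S x) : ℂ).re ∧ (inner ℂ x (S x) : ℂ).re ≤ B₂ * ‖x‖ ^ 2) ∧
      Function.Bijective S ∧
      ∃ Sinv : X →L[ℂ] X, (∀ x, Sinv (S x) = x) ∧ ∀ x, S (Sinv x) = x := by
  classical
  -- finite partial-sum bound
  have key : ∀ (x : X) (s : Finset ℕ),
      ‖∑ k ∈ s, (inner ℂ (e k) x : ℂ) • e k‖ ^ 2 ≤ B₂ * ∑ k ∈ s, ‖(inner ℂ (e k) x : ℂ)‖ ^ 2 := by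
    intro x s
    set u : X := ∑ k ∈ s, (inner ℂ (e k) x : ℂ) • e k with hu
    have hA : (0:ℝ) ≤ ∑ k ∈ s, ‖(inner ℂ (e k) x : ℂ)‖ ^ 2 :=
      Finset.sum_nonneg fun _ _ => sq_nonneg _
    by_cases hu0 : ‖u‖ = 0
    · rw [hu0]
      nlinarith [mul_nonneg hB₂.le hA]
    have hupos : (0:ℝ) < ‖u‖ := lt_of_le_of_ne (norm_nonneg _) (Ne.symm hu0)
    have huu : (inner ℂ u u : ℂ) =
        ∑ k ∈ s, (starRingEnd ℂ) (inner ℂ (e k) x : ℂ) * (inner ℂ (e k) u : ℂ) := by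
      rw [hu, sum_inner]
      exact Finset.sum_congr rfl fun k _ => by rw [inner_smul_left]
    have h1 : ‖u‖ ^ 2 ≤ ∑ k ∈ s, ‖(inner ℂ (e k) x : ℂ)‖ * ‖(inner ℂ (e k) u : ℂ)‖ := by
      have h0 : ‖u‖ ^ 2 = ‖(inner ℂ u u : ℂ)‖ := by
        rw [@inner_self_eq_norm_sq_to_K ℂ]
        simp
      rw [h0, huu]
      refine (norm_sum_le _ _).trans (le_of_eq ?_)
      refine Finset.sum_congr rfl fun k _ => ?_
      rw [norm_mul, RCLike.norm_conj]
    have h2 : (∑ k ∈ s, ‖(inner ℂ (e k) x : ℂ)‖ * ‖(inner ℂ (e k) u : ℂ)‖) ^ 2 ≤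
        (∑ k ∈ s, ‖(inner ℂ (e k) x : ℂ)‖ ^ 2) * ∑ k ∈ s, ‖(inner ℂ (e k) u : ℂ)‖ ^ 2 :=
      Finset.sum_mul_sq_le_sq_mul_sq s _ _
    have h3 : ∑ k ∈ s, ‖(inner ℂ (e k) u : ℂ)‖ ^ 2 ≤ B₂ * ‖u‖ ^ 2 :=
      le_trans (Summable.sum_le_tsum s (fun _ _ => sq_nonneg _) (hframe u).1) (hframe u).2.2
    have hN : (0:ℝ) < ‖u‖ ^ 2 := by positivity
    have h4 : (‖u‖ ^ 2) ^ 2 ≤ (∑ k ∈ s, ‖(inner ℂ (e k) x : ℂ)‖ ^ 2) * (B₂ * ‖u‖ ^ 2) :=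
      le_trans (le_trans (pow_le_pow_left₀ (sq_nonneg _) h1 2) h2)
        (mul_le_mul_of_nonneg_left h3 hA)
    have h5 : ‖u‖ ^ 2 * ‖u‖ ^ 2 ≤ (B₂ * ∑ k ∈ s, ‖(inner ℂ (e k) x : ℂ)‖ ^ 2) * ‖u‖ ^ 2 := by
      nlinarith [h4]
    exact le_of_mul_le_mul_right h5 hN
  -- summability
  have hsummable : ∀ x : X, Summable fun k => (inner ℂ (e k) x : ℂ) • e k := by
    intro x
    rw [summable_iff_vanishing]
    intro U hU
    rcases Metric.mem_nhds_iff.mp hU with ⟨ε, hε, hball⟩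
    have hεB : (0:ℝ) < ε ^ 2 / B₂ := by positivity
    obtain ⟨s, hs⟩ := summable_iff_vanishing.mp (hframe x).1 (Metric.ball 0 (ε ^ 2 / B₂))
      (Metric.ball_mem_nhds _ hεB)
    refine ⟨s, fun t ht => hball ?_⟩
    have h2 := hs t ht
    rw [Metric.mem_ball, dist_zero_right, Real.norm_eq_abs] at h2
    have hA : (0:ℝ) ≤ ∑ k ∈ t, ‖(inner ℂ (e k) x : ℂ)‖ ^ 2 :=
      Finset.sum_nonneg fun _ _ => sq_nonneg _
    have h2' : ∑ k ∈ t, ‖(inner ℂ (e k) x : ℂ)‖ ^ 2 < ε ^ 2 / B₂ := by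
      rwa [abs_of_nonneg hA] at h2
    have h3 : ‖∑ k ∈ t, (inner ℂ (e k) x : ℂ) • e k‖ ^ 2 < ε ^ 2 := by
      refine lt_of_le_of_lt (key x t) ?_
      calc B₂ * ∑ k ∈ t, ‖(inner ℂ (e k) x : ℂ)‖ ^ 2 < B₂ * (ε ^ 2 / B₂) :=
            (mul_lt_mul_iff_right₀ hB₂).mpr h2'
        _ = ε ^ 2 := by field_simp
    rw [Metric.mem_ball, dist_zero_right]
    exact lt_of_pow_lt_pow_left₀ 2 hε.le h3
  have hS0 : ∀ x : X, HasSum (fun k => (inner ℂ (e k) x : ℂ) • e k)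
      (∑' k, (inner ℂ (e k) x : ℂ) • e k) := fun x => (hsummable x).hasSum
  -- the tsum is bounded
  have hbound : ∀ x : X, ‖∑' k, (inner ℂ (e k) x : ℂ) • e k‖ ≤ B₂ * ‖x‖ := by
    intro x
    have hfin : ∀ s : Finset ℕ, ‖∑ k ∈ s, (inner ℂ (e k) x : ℂ) • e k‖ ≤ B₂ * ‖x‖ := by
      intro s
      have h1 := key x s
      have h2 : ∑ k ∈ s, ‖(inner ℂ (e k) x : ℂ)‖ ^ 2 ≤ B₂ * ‖x‖ ^ 2 :=
        le_trans (Summable.sum_le_tsum s (fun _ _ => sq_nonneg _) (hframe x).1) (hframe x).2.2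
      have h3 : ‖∑ k ∈ s, (inner ℂ (e k) x : ℂ) • e k‖ ^ 2 ≤ (B₂ * ‖x‖) ^ 2 := by nlinarith
      exact le_of_pow_le_pow_left₀ two_ne_zero (by positivity) h3
    exact le_of_tendsto' (hS0 x).tendsto_sum_nat.norm fun n => hfin (Finset.range n)
  -- define the operator
  let Slin : X →ₗ[ℂ] X :=
    { toFun := fun x => ∑' k, (inner ℂ (e k) x : ℂ) • e k
      map_add' := fun x y => by
        show (∑' k, (inner ℂ (e k) (x + y) : ℂ) • e k)
            = (∑' k, (inner ℂ (e k) x : ℂ) • e k) + ∑' k, (inner ℂ (e k) y : ℂ) • e k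
        rw [← ((hS0 x).add (hS0 y)).tsum_eq]
        exact tsum_congr fun k => by rw [inner_add_right, add_smul]
      map_smul' := fun a x => by
        simp only [RingHom.id_apply]
        show (∑' k, (inner ℂ (e k) (a • x) : ℂ) • e k)
            = a • ∑' k, (inner ℂ (e k) x : ℂ) • e k
        rw [← ((hS0 x).const_smul a).tsum_eq]
        exact tsum_congr fun k => by rw [inner_smul_right, smul_smul] }
  let S : X →L[ℂ] X := LinearMap.mkContinuous Slin B₂ hbound
  have hSapp : ∀ x : X, S x = ∑' k, (inner ℂ (e k) x : ℂ) • e k := fun _ => rfl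
  have hSx : ∀ x : X, HasSum (fun k => (inner ℂ (e k) x : ℂ) • e k) (S x) := by
    intro x; rw [hSapp]; exact hS0 x
  -- inner product identity
  have hinner : ∀ x : X,
      (inner ℂ x (S x) : ℂ) = ((∑' k, ‖(inner ℂ (e k) x : ℂ)‖ ^ 2 : ℝ) : ℂ) := by
    intro x
    have h1 : HasSum (fun k => (inner ℂ x ((inner ℂ (e k) x : ℂ) • e k) : ℂ)) (inner ℂ x (S x)) :=
      (innerSL ℂ x).hasSum (hSx x)
    have h2 : (fun k => (inner ℂ x ((inner ℂ (e k) x : ℂ) • e k) : ℂ))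
        = fun k => ((‖(inner ℂ (e k) x : ℂ)‖ ^ 2 : ℝ) : ℂ) := by
      funext k
      rw [inner_smul_right, ← inner_conj_symm x (e k), mul_comm, RCLike.conj_mul]
      norm_cast
    have h3 : HasSum (fun k => ((‖(inner ℂ (e k) x : ℂ)‖ ^ 2 : ℝ) : ℂ))
        (((∑' k, ‖(inner ℂ (e k) x : ℂ)‖ ^ 2 : ℝ) : ℂ)) :=
      Complex.hasSum_ofReal.mpr (hframe x).1.hasSum
    exact (h2 ▸ h1).unique h3
  have hre : ∀ x : X, (inner ℂ x (S x) : ℂ).re = ∑' k, ‖(inner ℂ (e k) x : ℂ)‖ ^ 2 := by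
    intro x; rw [hinner x, Complex.ofReal_re]
  -- lower norm bound
  have hlow : ∀ x : X, B₁ * ‖x‖ ≤ ‖S x‖ := by
    intro x
    by_cases hx : ‖x‖ = 0
    · rw [hx, mul_zero]; exact norm_nonneg _
    have hxpos : (0:ℝ) < ‖x‖ := lt_of_le_of_ne (norm_nonneg _) (Ne.symm hx)
    have h1 : B₁ * ‖x‖ ^ 2 ≤ (inner ℂ x (S x) : ℂ).re := by
      rw [hre]; exact (hframe x).2.1
    have h2 : (inner ℂ x (S x) : ℂ).re ≤ ‖x‖ * ‖S x‖ :=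
      (Complex.re_le_norm _).trans (by simpa using norm_inner_le_norm (𝕜 := ℂ) x (S x))
    nlinarith
  have hinj : Function.Injective S := by
    intro x y hxy
    have h0 : S (x - y) = 0 := by rw [map_sub, hxy, sub_self]
    have h1 : B₁ * ‖x - y‖ ≤ 0 := by simpa [h0] using hlow (x - y)
    have : ‖x - y‖ = 0 := le_antisymm (by nlinarith [norm_nonneg (x - y)]) (norm_nonneg _)
    exact sub_eq_zero.mp (norm_eq_zero.mp this)
  -- closed range
  have hanti : AntilipschitzWith (⟨B₁⁻¹, by positivity⟩ : NNReal) S := by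
    refine ContinuousLinearMap.antilipschitz_of_bound S fun x => ?_
    show ‖x‖ ≤ B₁⁻¹ * ‖S x‖
    calc ‖x‖ = B₁⁻¹ * (B₁ * ‖x‖) := by field_simp
      _ ≤ B₁⁻¹ * ‖S x‖ := mul_le_mul_of_nonneg_left (hlow x) (by positivity)
  have hclosed : IsClosed (Set.range S) := hanti.isClosed_range S.uniformContinuous
  have hrange : LinearMap.range (S : X →ₗ[ℂ] X) = ⊤ := by
    have hRc : IsClosed ((LinearMap.range (S : X →ₗ[ℂ] X) : Submodule ℂ X) : Set X) := by
      have : ((LinearMap.range (S : X →ₗ[ℂ] X) : Submodule ℂ X) : Set X) = Set.range S := by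
        ext z; simp [LinearMap.mem_range]
      rw [this]; exact hclosed
    haveI : CompleteSpace (LinearMap.range (S : X →ₗ[ℂ] X) : Submodule ℂ X) := hRc.completeSpace_coe
    have hT : (LinearMap.range (S : X →ₗ[ℂ] X) : Submodule ℂ X)ᗮ = ⊥ := by
      rw [Submodule.eq_bot_iff]
      intro y hy
      have h0 : (inner ℂ (S y) y : ℂ) = 0 :=
        (Submodule.mem_orthogonal _ _).mp hy (S y) (LinearMap.mem_range_self _ y)
      have h0' : (inner ℂ y (S y) : ℂ) = 0 := by
        rw [← inner_conj_symm y (S y), h0, map_zero]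
      have h1 : B₁ * ‖y‖ ^ 2 ≤ 0 := by
        have := (hframe y).2.1
        rw [← hre y, h0'] at this
        simpa using this
      have h2 : ‖y‖ ^ 2 = 0 := le_antisymm (by nlinarith [sq_nonneg ‖y‖]) (sq_nonneg _)
      exact norm_eq_zero.mp (pow_eq_zero_iff two_ne_zero |>.mp h2)
    calc LinearMap.range (S : X →ₗ[ℂ] X) = (LinearMap.range (S : X →ₗ[ℂ] X) : Submodule ℂ X)ᗮᗮ :=
          (Submodule.orthogonal_orthogonal _).symm
      _ = (⊥ : Submodule ℂ X)ᗮ := by rw [hT]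
      _ = ⊤ := Submodule.bot_orthogonal_eq_top
  have hker : LinearMap.ker (S : X →ₗ[ℂ] X) = ⊥ := LinearMap.ker_eq_bot.mpr hinj
  have hbij : Function.Bijective S := ⟨hinj, LinearMap.range_eq_top.mp hrange⟩
  refine ⟨S, hSx, fun x => ⟨hinner x, ?_, ?_⟩, hbij, ?_⟩
  · rw [hre]; exact (hframe x).2.1
  · rw [hre]; exact (hframe x).2.2
  · let E := ContinuousLinearEquiv.ofBijective S hker hrange
    refine ⟨E.symm.toContinuousLinearMap, fun x => ?_, fun x => ?_⟩
    · have : S x = E x := by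
        rw [ContinuousLinearEquiv.coeFn_ofBijective]
      show E.symm (S x) = x
      rw [this, ContinuousLinearEquiv.symm_apply_apply]
    · show S (E.symm x) = x
      have : S (E.symm x) = E (E.symm x) := by
        rw [ContinuousLinearEquiv.coeFn_ofBijective]
      rw [this, ContinuousLinearEquiv.apply_symm_apply]
end

section
/- For every n ∈ ℤ and every integer k ≥ 1, the function b_{n,k} : S² → ℂ defined by b_{n,k}(x₁,x₂,x₃) = ((x₁ + i x₂)/√(1−x₃²))^n · sin(k · arccos x₃) / (π · (1−x₃²)^{1/4}) for |x₃| < 1, and b_{n,k}(x₁,x₂,x₃) = 0 for |x₃| = 1, is continuous on the unit sphere S² ⊂ ℝ³ (in particular it is well defined and continuous at the north and south poles). -/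
open Real
open scoped Classical

/-- The spherical basis function `b_{n,k}` in Cartesian coordinates:
`b_{n,k}(x₁,x₂,x₃) = ((x₁ + i x₂)/√(1−x₃²))^n · sin(k arccos x₃)/(π (1−x₃²)^{1/4})`
for `|x₃| < 1`, extended by `0` to `|x₃| = 1`. -/
noncomputable def sphericalBasisFun (n : ℤ) (k : ℕ) (x : EuclideanSpace ℝ (Fin 3)) : ℂ :=
  if |x 2| = 1 then 0
  else
    (((x 0 : ℂ) + Complex.I * (x 1 : ℂ)) / (Real.sqrt (1 - x 2 ^ 2) : ℂ)) ^ n *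
      (Real.sin (k * Real.arccos (x 2)) : ℂ) /
        ((π : ℂ) * (((1 - x 2 ^ 2) ^ ((1 : ℝ) / 4) : ℝ) : ℂ))

theorem my_abs_sin_nat_mul_le (k : ℕ) (t : ℝ) : |Real.sin (k * t)| ≤ k * |Real.sin t| := by
  induction k with
  | zero => simp
  | succ m ih =>
    push_cast
    rw [add_mul, one_mul, Real.sin_add]
    have h1 : |Real.sin (m*t) * Real.cos t| ≤ |Real.sin (m*t)| := by
      rw [abs_mul]
      nlinarith [abs_cos_le_one t, abs_nonneg (Real.sin (m*t))]
    have h2 : |Real.cos (m*t) * Real.sin t| ≤ |Real.sin t| := by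
      rw [abs_mul]
      nlinarith [abs_cos_le_one (m*t), abs_nonneg (Real.sin t)]
    calc |Real.sin (m*t) * Real.cos t + Real.cos (m*t) * Real.sin t|
        ≤ |Real.sin (m*t) * Real.cos t| + |Real.cos (m*t) * Real.sin t| := abs_add_le _ _
      _ ≤ |Real.sin (m*t)| + |Real.sin t| := add_le_add h1 h2
      _ ≤ m * |Real.sin t| + |Real.sin t| := by linarith
      _ = (m+1) * |Real.sin t| := by ring

theorem my_sphere_sum (x : EuclideanSpace ℝ (Fin 3))
    (hx : x ∈ Metric.sphere (0 : EuclideanSpace ℝ (Fin 3)) 1) :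
    (x 0) ^ 2 + (x 1) ^ 2 + (x 2) ^ 2 = 1 := by
  have h : ‖x‖ = 1 := by simpa using hx
  rw [EuclideanSpace.norm_eq] at h
  have h2 : (∑ i, ‖x i‖ ^ 2) = 1 := by
    have hnn : (0:ℝ) ≤ ∑ i, ‖x i‖ ^ 2 := by positivity
    nlinarith [Real.sq_sqrt hnn, h]
  simpa [Fin.sum_univ_three, Real.norm_eq_abs, sq_abs] using h2

theorem my_norm_bound (n : ℤ) (k : ℕ) (x : EuclideanSpace ℝ (Fin 3))
    (hx : x ∈ Metric.sphere (0 : EuclideanSpace ℝ (Fin 3)) 1) :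
    ‖sphericalBasisFun n k x‖ ≤ ((k : ℝ) / π) * (1 - (x 2) ^ 2) ^ ((1:ℝ)/4) := by
  have hsum := my_sphere_sum x hx
  have hw2 : (x 2) ^ 2 ≤ 1 := by nlinarith [sq_nonneg (x 0), sq_nonneg (x 1)]
  by_cases h : |x 2| = 1
  · rw [sphericalBasisFun, if_pos h]
    simp only [norm_zero]
    have hs0 : (0:ℝ) ≤ 1 - (x 2) ^ 2 := by nlinarith
    positivity
  · have habs1 : |x 2| ≤ 1 := by nlinarith [sq_abs (x 2), abs_nonneg (x 2)]
    have habs : |x 2| < 1 := lt_of_le_of_ne habs1 h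
    set w := x 2 with hw
    set s := 1 - w ^ 2 with hsdef
    have hs : 0 < s := by nlinarith [sq_abs w, abs_nonneg w]
    have huv : (x 0) ^ 2 + (x 1) ^ 2 = s := by rw [hsdef]; linarith
    rw [sphericalBasisFun, if_neg h]
    have e1 : ‖((x 0 : ℂ) + Complex.I * (x 1 : ℂ))‖ = Real.sqrt s := by
      rw [mul_comm Complex.I ((x 1 : ℝ) : ℂ), Complex.norm_add_mul_I]
      rw [huv]
    have e2 : ‖((Real.sqrt s : ℝ) : ℂ)‖ = Real.sqrt s := by
      rw [Complex.norm_real, Real.norm_eq_abs, abs_of_nonneg (Real.sqrt_nonneg s)]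
    have e3 : ‖((π : ℝ) : ℂ)‖ = π := by
      rw [Complex.norm_real, Real.norm_eq_abs, abs_of_pos Real.pi_pos]
    have e4 : ‖((s ^ ((1:ℝ)/4) : ℝ) : ℂ)‖ = s ^ ((1:ℝ)/4) := by
      rw [Complex.norm_real, Real.norm_eq_abs, abs_of_pos (Real.rpow_pos_of_pos hs _)]
    have hsq : Real.sqrt s ≠ 0 := ne_of_gt (Real.sqrt_pos.2 hs)
    have ebase : ‖(((x 0 : ℂ) + Complex.I * (x 1 : ℂ)) / (Real.sqrt s : ℂ)) ^ n‖ = 1 := by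
      rw [norm_zpow, norm_div, e1, e2, div_self hsq, one_zpow]
    rw [norm_div, norm_mul, ebase, norm_mul, e3, e4, one_mul]
    have esin : ‖((Real.sin (k * Real.arccos w) : ℝ) : ℂ)‖ ≤ k * Real.sqrt s := by
      rw [Complex.norm_real, Real.norm_eq_abs]
      calc |Real.sin (k * Real.arccos w)| ≤ k * |Real.sin (Real.arccos w)| :=
            my_abs_sin_nat_mul_le k _
        _ = k * Real.sqrt s := by
            rw [Real.sin_arccos, abs_of_nonneg (Real.sqrt_nonneg _)]
    have hsqrt_eq : Real.sqrt s = s ^ ((1:ℝ)/4) * s ^ ((1:ℝ)/4) := by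
      rw [Real.sqrt_eq_rpow, ← Real.rpow_add hs]; norm_num
    have hden : 0 < π * s ^ ((1:ℝ)/4) := by positivity
    calc ‖((Real.sin (k * Real.arccos w) : ℝ) : ℂ)‖ / (π * s ^ ((1:ℝ)/4))
        ≤ (k * Real.sqrt s) / (π * s ^ ((1:ℝ)/4)) := by gcongr
      _ = ((k : ℝ) / π) * s ^ ((1:ℝ)/4) := by
          rw [hsqrt_eq]
          field_simp

/-- For every `n ∈ ℤ` and integer `k ≥ 1`, the function `b_{n,k}` is continuous on the
unit sphere `S² ⊂ ℝ³`; in particular it is well defined and continuous at the poles. -/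
theorem sphericalBasisFun_continuous (n : ℤ) (k : ℕ) (hk : 1 ≤ k) :
    Continuous fun ξ : Metric.sphere (0 : EuclideanSpace ℝ (Fin 3)) 1 =>
      sphericalBasisFun n k (ξ : EuclideanSpace ℝ (Fin 3)) := by
  have ccoord : ∀ i : Fin 3, Continuous fun ξ : Metric.sphere (0 : EuclideanSpace ℝ (Fin 3)) 1 =>
      (ξ : EuclideanSpace ℝ (Fin 3)) i := fun i =>
    (EuclideanSpace.proj i).continuous.comp continuous_subtype_val
  rw [continuous_iff_continuousAt]
  intro ξ
  by_cases h : |(ξ : EuclideanSpace ℝ (Fin 3)) 2| = 1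
  · -- pole case: squeeze to 0
    have hval : sphericalBasisFun n k (ξ : EuclideanSpace ℝ (Fin 3)) = 0 := by
      rw [sphericalBasisFun, if_pos h]
    rw [ContinuousAt, hval]
    refine squeeze_zero_norm (fun ξ' => my_norm_bound n k _ ξ'.2) ?_
    · have hzero : ((k : ℝ) / π) * (1 - ((ξ : EuclideanSpace ℝ (Fin 3)) 2) ^ 2) ^ ((1:ℝ)/4) = 0 := by
        have : (1 : ℝ) - ((ξ : EuclideanSpace ℝ (Fin 3)) 2) ^ 2 = 0 := by
          have := sq_abs ((ξ : EuclideanSpace ℝ (Fin 3)) 2)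
          rw [h] at this
          nlinarith
        rw [this, Real.zero_rpow (by norm_num), mul_zero]
      rw [← hzero]
      exact continuousAt_const.mul
        (((continuous_const.sub ((ccoord 2).pow 2)).continuousAt).rpow_const
          (Or.inr (by norm_num)))
  · -- interior case
    have hsum := my_sphere_sum _ ξ.2
    have hw2 : ((ξ : EuclideanSpace ℝ (Fin 3)) 2) ^ 2 ≤ 1 := by
      nlinarith [sq_nonneg ((ξ : EuclideanSpace ℝ (Fin 3)) 0),
        sq_nonneg ((ξ : EuclideanSpace ℝ (Fin 3)) 1)]
    have habs1 : |(ξ : EuclideanSpace ℝ (Fin 3)) 2| ≤ 1 := by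
      nlinarith [sq_abs ((ξ : EuclideanSpace ℝ (Fin 3)) 2),
        abs_nonneg ((ξ : EuclideanSpace ℝ (Fin 3)) 2)]
    have habs : |(ξ : EuclideanSpace ℝ (Fin 3)) 2| < 1 := lt_of_le_of_ne habs1 h
    have hs : 0 < 1 - ((ξ : EuclideanSpace ℝ (Fin 3)) 2) ^ 2 := by
      nlinarith [sq_abs ((ξ : EuclideanSpace ℝ (Fin 3)) 2),
        abs_nonneg ((ξ : EuclideanSpace ℝ (Fin 3)) 2)]
    -- the function eventually agrees with the explicit formula
    have hev : ∀ᶠ ξ' : Metric.sphere (0 : EuclideanSpace ℝ (Fin 3)) 1 in nhds ξ,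
        sphericalBasisFun n k (ξ' : EuclideanSpace ℝ (Fin 3)) =
          ((((ξ' : EuclideanSpace ℝ (Fin 3)) 0 : ℂ) +
              Complex.I * ((ξ' : EuclideanSpace ℝ (Fin 3)) 1 : ℂ)) /
              (Real.sqrt (1 - (ξ' : EuclideanSpace ℝ (Fin 3)) 2 ^ 2) : ℂ)) ^ n *
            (Real.sin (k * Real.arccos ((ξ' : EuclideanSpace ℝ (Fin 3)) 2)) : ℂ) /
              ((π : ℂ) *
                (((1 - (ξ' : EuclideanSpace ℝ (Fin 3)) 2 ^ 2) ^ ((1 : ℝ) / 4) : ℝ) : ℂ)) := by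
      have hopen : IsOpen {ξ' : Metric.sphere (0 : EuclideanSpace ℝ (Fin 3)) 1 |
          |(ξ' : EuclideanSpace ℝ (Fin 3)) 2| < 1} :=
        isOpen_lt ((ccoord 2).abs) continuous_const
      filter_upwards [hopen.mem_nhds habs] with ξ' hξ'
      rw [sphericalBasisFun, if_neg (ne_of_lt hξ')]
    apply ContinuousAt.congr _ (Filter.EventuallyEq.symm hev)
    -- continuity of the explicit formula at ξ
    have c0 : ContinuousAt (fun ξ' : Metric.sphere (0 : EuclideanSpace ℝ (Fin 3)) 1 =>
        ((ξ' : EuclideanSpace ℝ (Fin 3)) 0 : ℂ)) ξ :=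
      (Complex.continuous_ofReal.comp (ccoord 0)).continuousAt
    have c1 : ContinuousAt (fun ξ' : Metric.sphere (0 : EuclideanSpace ℝ (Fin 3)) 1 =>
        ((ξ' : EuclideanSpace ℝ (Fin 3)) 1 : ℂ)) ξ :=
      (Complex.continuous_ofReal.comp (ccoord 1)).continuousAt
    have c2r : ContinuousAt (fun ξ' : Metric.sphere (0 : EuclideanSpace ℝ (Fin 3)) 1 =>
        (ξ' : EuclideanSpace ℝ (Fin 3)) 2) ξ := (ccoord 2).continuousAt
    have csq : ContinuousAt (fun ξ' : Metric.sphere (0 : EuclideanSpace ℝ (Fin 3)) 1 =>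
        Real.sqrt (1 - (ξ' : EuclideanSpace ℝ (Fin 3)) 2 ^ 2)) ξ :=
      (Real.continuous_sqrt.comp (continuous_const.sub ((ccoord 2).pow 2))).continuousAt
    have hnum_ne : (((ξ : EuclideanSpace ℝ (Fin 3)) 0 : ℂ) +
        Complex.I * ((ξ : EuclideanSpace ℝ (Fin 3)) 1 : ℂ)) ≠ 0 := by
      intro hzero
      have hnorm : ‖(((ξ : EuclideanSpace ℝ (Fin 3)) 0 : ℂ) +
          Complex.I * ((ξ : EuclideanSpace ℝ (Fin 3)) 1 : ℂ))‖ = 0 := by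
        rw [hzero, norm_zero]
      rw [mul_comm Complex.I, Complex.norm_add_mul_I] at hnorm
      have hle : ((ξ : EuclideanSpace ℝ (Fin 3)) 0) ^ 2 +
          ((ξ : EuclideanSpace ℝ (Fin 3)) 1) ^ 2 ≤ 0 := Real.sqrt_eq_zero'.1 hnorm
      linarith
    have hsqrt_ne : ((Real.sqrt (1 - (ξ : EuclideanSpace ℝ (Fin 3)) 2 ^ 2) : ℝ) : ℂ) ≠ 0 := by
      rw [Ne, Complex.ofReal_eq_zero]
      exact ne_of_gt (Real.sqrt_pos.2 hs)
    have cbase : ContinuousAt (fun ξ' : Metric.sphere (0 : EuclideanSpace ℝ (Fin 3)) 1 =>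
        ((((ξ' : EuclideanSpace ℝ (Fin 3)) 0 : ℂ) +
          Complex.I * ((ξ' : EuclideanSpace ℝ (Fin 3)) 1 : ℂ)) /
          (Real.sqrt (1 - (ξ' : EuclideanSpace ℝ (Fin 3)) 2 ^ 2) : ℂ))) ξ :=
      (c0.add (continuousAt_const.mul c1)).div
        ((Complex.continuous_ofReal.continuousAt.comp csq)) hsqrt_ne
    have cpow : ContinuousAt (fun ξ' : Metric.sphere (0 : EuclideanSpace ℝ (Fin 3)) 1 =>
        ((((ξ' : EuclideanSpace ℝ (Fin 3)) 0 : ℂ) +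
          Complex.I * ((ξ' : EuclideanSpace ℝ (Fin 3)) 1 : ℂ)) /
          (Real.sqrt (1 - (ξ' : EuclideanSpace ℝ (Fin 3)) 2 ^ 2) : ℂ)) ^ n) ξ := by
      apply cbase.zpow₀
      left
      exact div_ne_zero hnum_ne hsqrt_ne
    have csin : ContinuousAt (fun ξ' : Metric.sphere (0 : EuclideanSpace ℝ (Fin 3)) 1 =>
        ((Real.sin (k * Real.arccos ((ξ' : EuclideanSpace ℝ (Fin 3)) 2)) : ℝ) : ℂ)) ξ := by
      apply Complex.continuous_ofReal.continuousAt.comp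
      exact (Real.continuous_sin.comp
        (continuous_const.mul (Real.continuous_arccos.comp (ccoord 2)))).continuousAt
    have crpow : ContinuousAt (fun ξ' : Metric.sphere (0 : EuclideanSpace ℝ (Fin 3)) 1 =>
        (((1 - (ξ' : EuclideanSpace ℝ (Fin 3)) 2 ^ 2) ^ ((1 : ℝ) / 4) : ℝ) : ℂ)) ξ := by
      apply Complex.continuous_ofReal.continuousAt.comp
      exact ((continuous_const.sub ((ccoord 2).pow 2)).continuousAt).rpow_const
        (Or.inr (by norm_num))
    have hden_ne : ((π : ℂ) *
        (((1 - (ξ : EuclideanSpace ℝ (Fin 3)) 2 ^ 2) ^ ((1 : ℝ) / 4) : ℝ) : ℂ)) ≠ 0 := by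
      apply mul_ne_zero
      · rw [Ne, Complex.ofReal_eq_zero]; exact Real.pi_ne_zero
      · rw [Ne, Complex.ofReal_eq_zero]
        exact ne_of_gt (Real.rpow_pos_of_pos hs _)
    exact ((cpow.mul csin).div (continuousAt_const.mul crpow) hden_ne)
end
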